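/- arXiv:cs/0612072 — 12 statements merged into one kernel-verified Lean document; each statement's English description precedes it below -/
import Mathlib

section
/- Assume the keywords are sorted so that cpc_1 ≤ cpc_2 ≤ … ≤ cpc_n. Then there exists a fractional prefix solution b* whose cost satisfies cost(b*) = min(B, Σ_{i=1}^n cpc_i·clicks_i) and which is optimal: value(b*) ≥ value(b) for every solution b with 0 ≤ b_i ≤ 1 for all i. -/
open Finset

/-- **Fixed model.** Keywords are sorted by nondecreasing cost-per-click. There is a
fractional prefix solution `bstar` whose cost equals `min B (total cost)` and which
maximizes `value` among all solutions `b` with `0 ≤ b i ≤ 1`. -/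
theorem stmt_0 (n : ℕ) (hn : 0 < n) (B : ℝ) (hB : 0 < B)
    (cpc clicks : Fin n → ℝ)
    (hcpc : ∀ i, 0 ≤ cpc i) (hclicks : ∀ i, 0 ≤ clicks i)
    (hsorted : Monotone cpc) :
    ∃ bstar : Fin n → ℝ,
      (∀ i, 0 ≤ bstar i ∧ bstar i ≤ 1) ∧
      (∃ istar : Fin n, (∀ i, i < istar → bstar i = 1) ∧ ∀ i, istar < i → bstar i = 0) ∧
      (∑ i, bstar i * cpc i * clicks i) = min B (∑ i, cpc i * clicks i) ∧
      ∀ b : Fin n → ℝ, (∀ i, 0 ≤ b i ∧ b i ≤ 1) →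
        (∑ i, b i * clicks i) / max 1 ((∑ i, b i * cpc i * clicks i) / B) ≤
          (∑ i, bstar i * clicks i) / max 1 ((∑ i, bstar i * cpc i * clicks i) / B) := by
  classical
  set C : ℝ := ∑ i, cpc i * clicks i with hCdef
  rcases le_or_gt C B with hCB | hCB
  · -- Case 1: total cost fits the budget; take all ones.
    refine ⟨fun _ => 1, fun i => ⟨zero_le_one, le_rfl⟩,
      ⟨⟨n - 1, Nat.sub_lt hn one_pos⟩, fun i _ => rfl, fun i hi => ?_⟩, ?_, ?_⟩
    · exfalso
      have h1 := Fin.lt_iff_val_lt_val.mp hi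
      have h2 := i.isLt
      simp only [Fin.val_mk] at h1
      omega
    · have h1 : (∑ i, (1:ℝ) * cpc i * clicks i) = C := by
        rw [hCdef]; exact Finset.sum_congr rfl fun i _ => by ring
      rw [h1, min_eq_right hCB]
    · intro b hb
      have hcost1 : (∑ i, (1:ℝ) * cpc i * clicks i) = C := by
        rw [hCdef]; exact Finset.sum_congr rfl fun i _ => by ring
      have hmax : max 1 ((∑ i, (1:ℝ) * cpc i * clicks i) / B) = 1 := by
        rw [hcost1]
        exact max_eq_left (div_le_one_of_le₀ hCB hB.le)
      rw [hmax, div_one]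
      have hbc : 0 ≤ ∑ i, b i * clicks i :=
        Finset.sum_nonneg fun i _ => mul_nonneg (hb i).1 (hclicks i)
      have h2 : (∑ i, b i * clicks i) / max 1 ((∑ i, b i * cpc i * clicks i) / B)
          ≤ ∑ i, b i * clicks i :=
        div_le_self hbc (le_max_left _ _)
      refine h2.trans (Finset.sum_le_sum fun i _ => ?_)
      rw [one_mul]
      exact mul_le_of_le_one_left (hclicks i) (hb i).2
  · -- Case 2: budget is exhausted; take the greedy prefix.
    set S : ℕ → ℝ := fun k => ∑ i : Fin n, if (i : ℕ) < k then cpc i * clicks i else 0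
      with hSdef
    have hS0 : S 0 = 0 := by simp [hSdef]
    have hSn : S n = C := by
      simp only [hSdef, hCdef]
      exact Finset.sum_congr rfl fun i _ => if_pos i.isLt
    have hex : ∃ k, B < S k := ⟨n, by rw [hSn]; exact hCB⟩
    set k0 := Nat.find hex with hk0def
    have hk0 : B < S k0 := Nat.find_spec hex
    have hk0pos : 0 < k0 := by
      rcases Nat.eq_zero_or_pos k0 with h | h
      · rw [h, hS0] at hk0; linarith
      · exact h
    have hk0n : k0 ≤ n := Nat.find_min' hex (by rw [hSn]; exact hCB)
    set m := k0 - 1 with hmdef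
    have hmk0 : m + 1 = k0 := Nat.succ_pred_eq_of_pos hk0pos
    have hSm : S m ≤ B := by
      have := Nat.find_min hex (show m < k0 by omega)
      linarith [not_lt.mp this]
    have hSm1 : B < S (m + 1) := by rw [hmk0]; exact hk0
    have hmn : m < n := by omega
    set istar : Fin n := ⟨m, hmn⟩ with histar
    -- step identity
    have hstep : S (m + 1) = S m + cpc istar * clicks istar := by
      simp only [hSdef]
      have hpt : ∀ i : Fin n, (if (i : ℕ) < m + 1 then cpc i * clicks i else 0)
          = (if (i : ℕ) < m then cpc i * clicks i else 0)
            + (if i = istar then cpc i * clicks i else 0) := by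
        intro i
        rcases lt_trichotomy (i : ℕ) m with h | h | h
        · rw [if_pos (by omega), if_pos h,
            if_neg (by simp only [histar, Fin.ext_iff, Fin.val_mk]; omega), add_zero]
        · rw [if_pos (by omega), if_neg (by omega),
            if_pos (by simp only [histar, Fin.ext_iff, Fin.val_mk]; omega), zero_add]
        · rw [if_neg (by omega), if_neg (by omega),
            if_neg (by simp only [histar, Fin.ext_iff, Fin.val_mk]; omega), add_zero]
      rw [Finset.sum_congr rfl fun i _ => hpt i, Finset.sum_add_distrib,
        Finset.sum_ite_eq' Finset.univ istar (fun i => cpc i * clicks i)]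
      simp
    have hx : 0 < cpc istar * clicks istar := by
      have := hstep; linarith
    have ht : 0 < cpc istar := by
      nlinarith [hclicks istar, hcpc istar]
    set frac : ℝ := (B - S m) / (cpc istar * clicks istar) with hfracdef
    have hfrac0 : 0 ≤ frac := div_nonneg (by linarith) hx.le
    have hfrac1 : frac ≤ 1 := by
      rw [hfracdef, div_le_one hx]
      linarith [hstep, hSm1]
    set bstar : Fin n → ℝ := fun i =>
      if (i : ℕ) < m then 1 else if (i : ℕ) = m then frac else 0 with hbstardef
    have hba : ∀ i : Fin n, bstar i
        = if (i : ℕ) < m then 1 else if (i : ℕ) = m then frac else 0 := fun i => rfl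
    have hbounds : ∀ i, 0 ≤ bstar i ∧ bstar i ≤ 1 := by
      intro i
      rw [hba i]
      split_ifs with h1 h2
      · exact ⟨zero_le_one, le_rfl⟩
      · exact ⟨hfrac0, hfrac1⟩
      · exact ⟨le_rfl, zero_le_one⟩
    -- cost of bstar equals B
    have hcost : (∑ i, bstar i * cpc i * clicks i) = B := by
      have hpt : ∀ i : Fin n, bstar i * cpc i * clicks i
          = (if (i : ℕ) < m then cpc i * clicks i else 0)
            + (if i = istar then frac * (cpc i * clicks i) else 0) := by
        intro i
        rw [hba i]
        rcases lt_trichotomy (i : ℕ) m with h | h | h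
        · rw [if_pos h, if_pos h,
            if_neg (by simp only [histar, Fin.ext_iff, Fin.val_mk]; omega)]
          ring
        · rw [if_neg (by omega), if_pos h, if_neg (by omega),
            if_pos (by simp only [histar, Fin.ext_iff, Fin.val_mk]; omega)]
          ring
        · rw [if_neg (by omega), if_neg (by omega), if_neg (by omega),
            if_neg (by simp only [histar, Fin.ext_iff, Fin.val_mk]; omega)]
          ring
      rw [Finset.sum_congr rfl fun i _ => hpt i, Finset.sum_add_distrib,
        Finset.sum_ite_eq' Finset.univ istar (fun i => frac * (cpc i * clicks i))]
      have hSm' : (∑ i : Fin n, if (i : ℕ) < m then cpc i * clicks i else 0) = S m := rfl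
      rw [hSm']
      simp only [Finset.mem_univ, if_pos]
      rw [hfracdef, div_mul_cancel₀ _ (ne_of_gt hx)]
      ring
    -- key optimality lemma
    have key : ∀ b : Fin n → ℝ, (∀ i, 0 ≤ b i ∧ b i ≤ 1) →
        (∑ i, b i * cpc i * clicks i) ≤ B →
        (∑ i, b i * clicks i) ≤ ∑ i, bstar i * clicks i := by
      intro b hb hbcost
      have hpt : ∀ i : Fin n,
          cpc istar * (b i * clicks i) + bstar i * cpc i * clicks i
          ≤ cpc istar * (bstar i * clicks i) + b i * cpc i * clicks i := by
        intro i
        have hkey : 0 ≤ (bstar i - b i) * ((cpc istar - cpc i) * clicks i) := by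
          rcases lt_trichotomy (i : ℕ) m with h | h | h
          · have hb1 : bstar i = 1 := by rw [hba i, if_pos h]
            have hcl : cpc i ≤ cpc istar := hsorted (by
              rw [Fin.le_def]; simp only [histar, Fin.val_mk]; omega)
            have := (hb i).2
            rw [hb1]
            apply mul_nonneg (by linarith) (mul_nonneg (by linarith) (hclicks i))
          · have hieq : i = istar := by
              simp only [histar, Fin.ext_iff, Fin.val_mk]; omega
            rw [hieq]
            simp
          · have hb0 : bstar i = 0 := by
              rw [hba i, if_neg (by omega), if_neg (by omega)]
            have hcl : cpc istar ≤ cpc i := hsorted (by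
              rw [Fin.le_def]; simp only [histar, Fin.val_mk]; omega)
            have := (hb i).1
            rw [hb0]
            have hh := mul_nonneg (mul_nonneg (hb i).1 (sub_nonneg.mpr hcl)) (hclicks i)
            nlinarith [hh]
        nlinarith [hkey]
      have hsum := Finset.sum_le_sum (fun i (_ : i ∈ Finset.univ) => hpt i)
      rw [Finset.sum_add_distrib, Finset.sum_add_distrib, ← Finset.mul_sum,
        ← Finset.mul_sum] at hsum
      have hfin : cpc istar * (∑ i, b i * clicks i)
          ≤ cpc istar * (∑ i, bstar i * clicks i) := by
        linarith [hcost, hbcost, hsum]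
      exact le_of_mul_le_mul_left hfin ht
    refine ⟨bstar, hbounds, ⟨istar, fun i hi => ?_, fun i hi => ?_⟩, ?_, ?_⟩
    · have hlt : (i : ℕ) < m := by
        have := Fin.lt_iff_val_lt_val.mp hi
        simp only [histar, Fin.val_mk] at this
        omega
      rw [hba i, if_pos hlt]
    · have hgt : m < (i : ℕ) := by
        have := Fin.lt_iff_val_lt_val.mp hi
        simp only [histar, Fin.val_mk] at this
        omega
      rw [hba i, if_neg (by omega), if_neg (by omega)]
    · rw [hcost, min_eq_left hCB.le]
    · intro b hb
      have hmaxstar : max 1 ((∑ i, bstar i * cpc i * clicks i) / B) = 1 := by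
        rw [hcost, div_self (ne_of_gt hB)]
        simp
      rw [hmaxstar, div_one]
      set cb : ℝ := ∑ i, b i * cpc i * clicks i with hcbdef
      have hcb0 : 0 ≤ cb :=
        Finset.sum_nonneg fun i _ =>
          mul_nonneg (mul_nonneg (hb i).1 (hcpc i)) (hclicks i)
      rcases le_or_gt cb B with hle | hgt
      · have hmax : max 1 (cb / B) = 1 := max_eq_left (div_le_one_of_le₀ hle hB.le)
        rw [hmax, div_one]
        exact key b hb hle
      · have hmax : max 1 (cb / B) = cb / B :=
          max_eq_right (by rw [le_div_iff₀ hB]; linarith)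
        rw [hmax]
        set s : ℝ := B / cb with hsdef
        have hcbpos : 0 < cb := lt_trans hB hgt
        have hs0 : 0 ≤ s := div_nonneg hB.le hcb0
        have hs1 : s ≤ 1 := by rw [hsdef, div_le_one hcbpos]; linarith
        have hb' : ∀ i, 0 ≤ s * b i ∧ s * b i ≤ 1 := by
          intro i
          constructor
          · exact mul_nonneg hs0 (hb i).1
          · have hh := mul_le_mul hs1 (hb i).2 (hb i).1 zero_le_one
            simpa using hh
        have hcost' : (∑ i, (s * b i) * cpc i * clicks i) = B := by
          have hsc : (∑ i, (s * b i) * cpc i * clicks i) = s * cb := by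
            rw [hcbdef, Finset.mul_sum]
            exact Finset.sum_congr rfl fun i _ => by ring
          rw [hsc, hsdef, div_mul_cancel₀ _ (ne_of_gt hcbpos)]
        have hkey := key (fun i => s * b i) hb' (le_of_eq hcost')
        have hlhs : (∑ i, b i * clicks i) / (cb / B) = ∑ i, (s * b i) * clicks i := by
          rw [div_div_eq_mul_div, Finset.sum_congr rfl
            (fun i (_ : i ∈ Finset.univ) => show (s * b i) * clicks i
              = s * (b i * clicks i) by ring), ← Finset.mul_sum, hsdef]
          ring
        rw [hlhs]
        exact hkey
end

section
/- In the proportional model, assume cpc_1 ≤ cpc_2 ≤ … ≤ cpc_n. Then for every solution b with 0 ≤ b_i ≤ 1 there exists a fractional prefix solution b' with E[value(b')] ≥ E[value(b)]; in particular the maximum of E[value(·)] over all solutions is attained by a fractional prefix solution. -/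
open Finset

/-- Expected value of a solution `b` in the proportional model: the total click count `C`
takes values `c ∈ cvals` with probability `p c`; keyword `i` then gets `q i * c` clicks. -/
noncomputable def propEv (n : ℕ) (B : ℝ) (cpc q : Fin n → ℝ) (cvals : Finset ℝ)
    (p : ℝ → ℝ) (b : Fin n → ℝ) : ℝ :=
  ∑ c ∈ cvals, p c *
    ((c * ∑ i, b i * q i) / max 1 ((c * ∑ i, b i * q i * cpc i) / B))

lemma prop_exchange {n : ℕ} (cpc q b b' : Fin n → ℝ) (hsorted : Monotone cpc)
    (hq : ∀ i, 0 ≤ q i) (istar : Fin n)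
    (h1 : ∀ i, i < istar → b i ≤ b' i) (h2 : ∀ i, istar < i → b' i ≤ b i)
    (hsum : ∑ i, b' i * q i = ∑ i, b i * q i) :
    ∑ i, b' i * q i * cpc i ≤ ∑ i, b i * q i * cpc i := by
  have key : ∀ i : Fin n, (b i - b' i) * q i * cpc istar ≤ (b i - b' i) * q i * cpc i := by
    intro i
    rcases lt_trichotomy i istar with h | h | h
    · have hx : (b i - b' i) * q i ≤ 0 :=
        mul_nonpos_of_nonpos_of_nonneg (sub_nonpos.mpr (h1 i h)) (hq i)
      exact mul_le_mul_of_nonpos_left (hsorted h.le) hx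
    · rw [h]
    · have hx : 0 ≤ (b i - b' i) * q i :=
        mul_nonneg (sub_nonneg.mpr (h2 i h)) (hq i)
      exact mul_le_mul_of_nonneg_left (hsorted h.le) hx
  have hsum2 := Finset.sum_le_sum (fun i (_ : i ∈ Finset.univ) => key i)
  have e1 : ∑ i : Fin n, (b i - b' i) * q i * cpc istar
      = ((∑ i, b i * q i) - ∑ i, b' i * q i) * cpc istar := by
    simp only [sub_mul, Finset.sum_sub_distrib, Finset.sum_mul]
  have e2 : ∑ i : Fin n, (b i - b' i) * q i * cpc i
      = (∑ i, b i * q i * cpc i) - ∑ i, b' i * q i * cpc i := by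
    simp only [sub_mul, Finset.sum_sub_distrib, Finset.sum_mul]
  rw [e1, e2, hsum, sub_self, zero_mul] at hsum2
  linarith

lemma prop_ev_mono (n : ℕ) (B : ℝ) (hB : 0 < B) (cpc q : Fin n → ℝ)
    (cvals : Finset ℝ) (p : ℝ → ℝ)
    (hc : ∀ c ∈ cvals, (0:ℝ) ≤ c) (hp : ∀ c ∈ cvals, 0 ≤ p c)
    (b b' : Fin n → ℝ) (hbq : 0 ≤ ∑ i, b i * q i)
    (hsum : ∑ i, b' i * q i = ∑ i, b i * q i)
    (ht : ∑ i, b' i * q i * cpc i ≤ ∑ i, b i * q i * cpc i) :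
    propEv n B cpc q cvals p b ≤ propEv n B cpc q cvals p b' := by
  unfold propEv
  rw [hsum]
  apply Finset.sum_le_sum
  intro c hcv
  apply mul_le_mul_of_nonneg_left _ (hp c hcv)
  have hden : (0:ℝ) < max 1 ((c * ∑ i, b' i * q i * cpc i) / B) :=
    lt_of_lt_of_le one_pos (le_max_left _ _)
  have hmax : max 1 ((c * ∑ i, b' i * q i * cpc i) / B)
      ≤ max 1 ((c * ∑ i, b i * q i * cpc i) / B) := by
    apply max_le_max le_rfl
    have := mul_le_mul_of_nonneg_left ht (hc c hcv)
    exact div_le_div_of_nonneg_right this hB.le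
  exact div_le_div_of_nonneg_left (mul_nonneg (hc c hcv) hbq) hden hmax

/-- Prefix construction: there is a fractional prefix solution with the same q-mass. -/
lemma prop_prefix {n : ℕ} (hn : 0 < n) (q b : Fin n → ℝ)
    (hq : ∀ i, 0 ≤ q i) (hqsum : ∑ i, q i = 1) (hb : ∀ i, 0 ≤ b i ∧ b i ≤ 1) :
    ∃ b' : Fin n → ℝ, (∀ i, 0 ≤ b' i ∧ b' i ≤ 1) ∧
      (∃ istar : Fin n, (∀ i, i < istar → b' i = 1) ∧ ∀ i, istar < i → b' i = 0) ∧
      ∑ i, b' i * q i = ∑ i, b i * q i := by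
  classical
  set s := ∑ i, b i * q i with hs
  have hs0 : 0 ≤ s := Finset.sum_nonneg fun i _ => mul_nonneg (hb i).1 (hq i)
  have hs1 : s ≤ 1 := by
    have : s ≤ ∑ i, q i :=
      Finset.sum_le_sum fun i _ => by nlinarith [(hb i).1, (hb i).2, hq i]
    rwa [hqsum] at this
  set qq : ℕ → ℝ := fun m => if h : m < n then q ⟨m, h⟩ else 0 with hqq
  set Q : ℕ → ℝ := fun j => ∑ m ∈ Finset.range j, qq m with hQdef
  have hQn : Q n = 1 := by
    rw [hQdef]
    simp only
    rw [← Fin.sum_univ_eq_sum_range, ← hqsum]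
    apply Finset.sum_congr rfl
    intro i _
    simp [hqq, i.isLt]
  have hQ0 : Q 0 ≤ s := by simp [hQdef, hs0]
  obtain ⟨K, hKle, hKs, hKmax⟩ :
      ∃ K, K ≤ n ∧ Q K ≤ s ∧ ∀ j, j ≤ n → Q j ≤ s → j ≤ K :=
    ⟨Nat.findGreatest (fun j => Q j ≤ s) n, Nat.findGreatest_le n,
      Nat.findGreatest_spec (P := fun j => Q j ≤ s) (Nat.zero_le n) hQ0,
      fun j hj hQj => Nat.le_findGreatest hj hQj⟩
  rcases eq_or_lt_of_le hKle with hKn | hKn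
  · -- K = n: then s = 1 and the all-ones solution works
    have h1s : (1:ℝ) ≤ s := by rw [hKn, hQn] at hKs; exact hKs
    refine ⟨fun _ => 1, fun i => ⟨zero_le_one, le_rfl⟩,
      ⟨⟨n - 1, by omega⟩, fun i _ => rfl, fun i hi => absurd hi ?_⟩, ?_⟩
    · have := i.isLt
      simp only [Fin.lt_def]
      omega
    · simp only [one_mul]
      rw [hqsum]
      linarith
  · -- K < n
    have hq1 : s < Q (K + 1) := by
      by_contra h
      push_neg at h
      have := hKmax (K + 1) (by omega) h
      omega
    have hQsucc : Q (K + 1) = Q K + q ⟨K, hKn⟩ := by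
      rw [hQdef]
      simp only
      rw [Finset.sum_range_succ]
      congr 1
      simp [hqq, hKn]
    have hqKpos : 0 < q ⟨K, hKn⟩ := by linarith
    set r : ℝ := (s - Q K) / q ⟨K, hKn⟩ with hr
    have hr0 : 0 ≤ r := div_nonneg (by linarith) hqKpos.le
    have hr1 : r ≤ 1 := by rw [hr, div_le_one hqKpos]; linarith
    set bb : ℕ → ℝ := fun m => if m < K then 1 else if m = K then r else 0 with hbb
    refine ⟨fun i => bb i, ?_, ⟨⟨K, hKn⟩, ?_, ?_⟩, ?_⟩
    · intro i
      simp only [hbb]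
      split_ifs
      · exact ⟨zero_le_one, le_rfl⟩
      · exact ⟨hr0, hr1⟩
      · exact ⟨le_rfl, zero_le_one⟩
    · intro i hi
      have hi' : (i : ℕ) < K := hi
      simp [hbb, hi']
    · intro i hi
      have hi' : K < (i : ℕ) := hi
      simp only [hbb]
      rw [if_neg (by omega), if_neg (by omega)]
    · -- the sum equals s
      have step1 : ∑ i : Fin n, bb ↑i * q i = ∑ m ∈ Finset.range n, bb m * qq m := by
        rw [← Fin.sum_univ_eq_sum_range (fun m => bb m * qq m)]
        apply Finset.sum_congr rfl
        intro i _
        simp [hqq, i.isLt]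
      have step2 : ∑ m ∈ Finset.range n, bb m * qq m
          = ∑ m ∈ Finset.range (K + 1), bb m * qq m := by
        symm
        apply Finset.sum_subset (Finset.range_subset_range.mpr hKn)
        intro m hm hm'
        simp only [Finset.mem_range] at hm hm'
        have : bb m = 0 := by simp only [hbb]; rw [if_neg (by omega), if_neg (by omega)]
        rw [this, zero_mul]
      have step3 : ∑ m ∈ Finset.range (K + 1), bb m * qq m
          = Q K + r * q ⟨K, hKn⟩ := by
        rw [Finset.sum_range_succ]
        congr 1
        · rw [hQdef]
          apply Finset.sum_congr rfl
          intro m hm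
          simp only [Finset.mem_range] at hm
          simp [hbb, hm]
        · simp [hbb, hqq, hKn]
      rw [step1, step2, step3, hr, div_mul_cancel₀ _ hqKpos.ne']
      ring

/-- **Proportional model.** For every solution there is a fractional prefix solution that is
at least as good in expectation; in particular the maximum of the expected value is attained
by a fractional prefix solution. -/
theorem stmt_1 (n : ℕ) (hn : 0 < n) (B : ℝ) (hB : 0 < B)
    (cpc q : Fin n → ℝ) (hcpc : ∀ i, 0 ≤ cpc i) (hsorted : Monotone cpc)
    (hq : ∀ i, 0 ≤ q i) (hqsum : ∑ i, q i = 1)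
    (cvals : Finset ℝ) (p : ℝ → ℝ)
    (hc : ∀ c ∈ cvals, (0:ℝ) ≤ c) (hp : ∀ c ∈ cvals, 0 ≤ p c)
    (hpsum : ∑ c ∈ cvals, p c = 1) :
    (∀ b : Fin n → ℝ, (∀ i, 0 ≤ b i ∧ b i ≤ 1) →
      ∃ b' : Fin n → ℝ, (∀ i, 0 ≤ b' i ∧ b' i ≤ 1) ∧
        (∃ istar : Fin n, (∀ i, i < istar → b' i = 1) ∧ ∀ i, istar < i → b' i = 0) ∧
        propEv n B cpc q cvals p b ≤ propEv n B cpc q cvals p b') ∧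
    (∃ bstar : Fin n → ℝ, (∀ i, 0 ≤ bstar i ∧ bstar i ≤ 1) ∧
      (∃ istar : Fin n, (∀ i, i < istar → bstar i = 1) ∧ ∀ i, istar < i → bstar i = 0) ∧
      ∀ b : Fin n → ℝ, (∀ i, 0 ≤ b i ∧ b i ≤ 1) →
        propEv n B cpc q cvals p b ≤ propEv n B cpc q cvals p bstar) := by
  have main : ∀ b : Fin n → ℝ, (∀ i, 0 ≤ b i ∧ b i ≤ 1) →
      ∃ b' : Fin n → ℝ, (∀ i, 0 ≤ b' i ∧ b' i ≤ 1) ∧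
        (∃ istar : Fin n, (∀ i, i < istar → b' i = 1) ∧ ∀ i, istar < i → b' i = 0) ∧
        propEv n B cpc q cvals p b ≤ propEv n B cpc q cvals p b' := by
    intro b hb
    obtain ⟨b', hb', ⟨istar, hpre1, hpre2⟩, hbsum⟩ := prop_prefix hn q b hq hqsum hb
    refine ⟨b', hb', ⟨istar, hpre1, hpre2⟩, ?_⟩
    have hexch : ∑ i, b' i * q i * cpc i ≤ ∑ i, b i * q i * cpc i :=
      prop_exchange cpc q b b' hsorted hq istar
        (fun i hi => (hpre1 i hi) ▸ (hb i).2)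
        (fun i hi => (hpre2 i hi) ▸ (hb i).1)
        hbsum
    exact prop_ev_mono n B hB cpc q cvals p hc hp b b'
      (Finset.sum_nonneg fun i _ => mul_nonneg (hb i).1 (hq i)) hbsum hexch
  refine ⟨main, ?_⟩
  -- compactness: the maximum over [0,1]^n is attained
  have hcomp : IsCompact (Set.Icc (0 : Fin n → ℝ) 1) := isCompact_Icc
  have hne : (Set.Icc (0 : Fin n → ℝ) 1).Nonempty := ⟨0, le_rfl, zero_le_one⟩
  have hcont : ContinuousOn (propEv n B cpc q cvals p) (Set.Icc 0 1) := by
    apply Continuous.continuousOn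
    unfold propEv
    apply continuous_finset_sum
    intro c _
    apply Continuous.mul continuous_const
    apply Continuous.div
    · exact continuous_const.mul
        (continuous_finset_sum _ fun i _ => (continuous_apply i).mul continuous_const)
    · apply Continuous.max continuous_const
      exact (continuous_const.mul (continuous_finset_sum _ fun i _ =>
        ((continuous_apply i).mul continuous_const).mul continuous_const)).div_const B
    · intro x
      exact ne_of_gt (lt_of_lt_of_le one_pos (le_max_left _ _))
  obtain ⟨bmax, hbmem, hbmax⟩ := hcomp.exists_isMaxOn hne hcont
  have hbmax' : ∀ i, 0 ≤ bmax i ∧ bmax i ≤ 1 := fun i => ⟨hbmem.1 i, hbmem.2 i⟩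
  obtain ⟨b', hb'1, hb'2, hb'3⟩ := main bmax hbmax'
  refine ⟨b', hb'1, hb'2, fun b hb => ?_⟩
  have hmem : b ∈ Set.Icc (0 : Fin n → ℝ) 1 :=
    ⟨fun i => (hb i).1, fun i => (hb i).2⟩
  exact le_trans (hbmax hmem) hb'3
end

section
/- (Interchange step.) In the proportional model, assume cpc_1 ≤ cpc_2 ≤ … ≤ cpc_n. Let b be a solution and let i < j be indices with b_i < 1, b_j > 0, q_i·cpc_i > 0 and q_j·cpc_j > 0. Set δ_j = min(b_j, (1−b_i)·q_i·cpc_i/(q_j·cpc_j)) and δ_i = (q_j·cpc_j/(q_i·cpc_i))·δ_j, and define b' by b'_i = b_i + δ_i, b'_j = b_j − δ_j, and b'_k = b_k for k ∉ {i,j}. Then b' is a solution (all entries lie in [0,1]), and for every value c ≥ 0 of the total click count: cost^c(b') = cost^c(b) and clicks^c(b') ≥ clicks^c(b); consequently value^c(b') ≥ value^c(b) for every c, and E[value(b')] ≥ E[value(b)]. -/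
open Finset

/-- **Interchange step in the proportional model.** Moving bid mass from an expensive keyword
`j` to a cheaper keyword `i` keeps the cost the same for every realization `c ≥ 0`, does not
decrease the clicks, hence does not decrease the value for any `c ≥ 0` nor the expected value. -/
theorem stmt_2 (n : ℕ) (B : ℝ) (hB : 0 < B)
    (cpc q : Fin n → ℝ) (hcpc : ∀ i, 0 ≤ cpc i) (hsorted : Monotone cpc)
    (hq : ∀ i, 0 ≤ q i) (hqsum : ∑ i, q i = 1)
    (cvals : Finset ℝ) (p : ℝ → ℝ)
    (hc : ∀ c ∈ cvals, (0:ℝ) ≤ c) (hp : ∀ c ∈ cvals, 0 ≤ p c)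
    (b : Fin n → ℝ) (hb : ∀ k, 0 ≤ b k ∧ b k ≤ 1)
    (i j : Fin n) (hij : i < j) (hbi : b i < 1) (hbj : 0 < b j)
    (hqi : 0 < q i * cpc i) (hqj : 0 < q j * cpc j) :
    let δj : ℝ := min (b j) ((1 - b i) * (q i * cpc i) / (q j * cpc j))
    let δi : ℝ := (q j * cpc j / (q i * cpc i)) * δj
    let b' : Fin n → ℝ := fun k => if k = i then b i + δi else if k = j then b j - δj else b k
    (∀ k, 0 ≤ b' k ∧ b' k ≤ 1) ∧
    (∀ c : ℝ, 0 ≤ c →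
      c * (∑ k, b' k * q k * cpc k) = c * (∑ k, b k * q k * cpc k) ∧
      c * (∑ k, b k * q k) ≤ c * (∑ k, b' k * q k) ∧
      (c * ∑ k, b k * q k) / max 1 ((c * ∑ k, b k * q k * cpc k) / B) ≤
        (c * ∑ k, b' k * q k) / max 1 ((c * ∑ k, b' k * q k * cpc k) / B)) ∧
    propEv n B cpc q cvals p b ≤ propEv n B cpc q cvals p b' := by
  intro δj δi b'
  have hne : i ≠ j := ne_of_lt hij
  have hδjdef : δj = min (b j) ((1 - b i) * (q i * cpc i) / (q j * cpc j)) := rfl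
  have hδidef : δi = (q j * cpc j / (q i * cpc i)) * δj := rfl
  have hb'def : ∀ k, b' k = if k = i then b i + δi else if k = j then b j - δj else b k :=
    fun k => rfl
  have hqipos : 0 < q i := by nlinarith [hcpc i, hq i]
  have hcpcipos : 0 < cpc i := by nlinarith [hcpc i, hq i]
  have hqjpos : 0 < q j := by nlinarith [hcpc j, hq j]
  have hcpcjpos : 0 < cpc j := by nlinarith [hcpc j, hq j]
  have hcij : cpc i ≤ cpc j := hsorted (le_of_lt hij)
  have h1bi : (0:ℝ) < 1 - b i := by linarith
  have hδjpos : 0 < δj := by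
    rw [hδjdef]
    exact lt_min hbj (by positivity)
  have hδjle : δj ≤ b j := hδjdef ▸ min_le_left _ _
  have hδipos : 0 < δi := by
    rw [hδidef]; positivity
  have hδile : δi ≤ 1 - b i := by
    rw [hδidef]
    calc (q j * cpc j / (q i * cpc i)) * δj
        ≤ (q j * cpc j / (q i * cpc i)) * ((1 - b i) * (q i * cpc i) / (q j * cpc j)) := by
          apply mul_le_mul_of_nonneg_left (hδjdef ▸ min_le_right _ _) (by positivity)
      _ = 1 - b i := by field_simp
  -- key summation lemma
  have key : ∀ g : Fin n → ℝ,
      ∑ k, b' k * g k = (∑ k, b k * g k) + δi * g i - δj * g j := by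
    intro g
    have hterm : ∀ k, b' k * g k =
        b k * g k + (if k = i then δi * g i else if k = j then -(δj * g j) else 0) := by
      intro k
      rw [hb'def k]
      by_cases h1 : k = i
      · subst h1; simp; ring
      · by_cases h2 : k = j
        · subst h2; simp [h1]; ring
        · simp [h1, h2]
    have hsum : ∑ k, (if k = i then δi * g i else if k = j then -(δj * g j) else 0)
        = δi * g i - δj * g j := by
      rw [← Finset.sum_subset (Finset.subset_univ ({i, j} : Finset (Fin n)))]
      · rw [Finset.sum_pair hne]
        simp [hne, hne.symm]
        ring
      · intro k _ hk
        simp only [Finset.mem_insert, Finset.mem_singleton, not_or] at hk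
        simp [hk.1, hk.2]
    calc ∑ k, b' k * g k
        = ∑ k, (b k * g k + (if k = i then δi * g i else if k = j then -(δj * g j) else 0)) :=
          Finset.sum_congr rfl (fun k _ => hterm k)
      _ = (∑ k, b k * g k) + δi * g i - δj * g j := by
          rw [Finset.sum_add_distrib, hsum]; ring
  have hbal : δi * (q i * cpc i) = δj * (q j * cpc j) := by
    rw [hδidef]; field_simp
  -- cost sum equality
  have hcost : ∑ k, b' k * q k * cpc k = ∑ k, b k * q k * cpc k := by
    have := key (fun k => q k * cpc k)
    simp only [← mul_assoc] at this
    rw [this]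
    nlinarith [hbal]
  -- clicks inequality
  have hclicks : ∑ k, b k * q k ≤ ∑ k, b' k * q k := by
    rw [key q]
    have h1 : δj * q j ≤ δi * q i := by
      have : δi * q i = δj * q j * (cpc j / cpc i) := by
        rw [hδidef]; field_simp
      rw [this]
      have h2 : (1:ℝ) ≤ cpc j / cpc i := (one_le_div hcpcipos).mpr hcij
      nlinarith [mul_pos hδjpos hqjpos]
    linarith
  have hval : ∀ c : ℝ, 0 ≤ c →
      (c * ∑ k, b k * q k) / max 1 ((c * ∑ k, b k * q k * cpc k) / B) ≤
        (c * ∑ k, b' k * q k) / max 1 ((c * ∑ k, b' k * q k * cpc k) / B) := by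
    intro c hc0
    have hcosteq : c * (∑ k, b' k * q k * cpc k) = c * (∑ k, b k * q k * cpc k) := by
      rw [hcost]
    rw [hcosteq]
    have hd : (0:ℝ) < max 1 ((c * ∑ k, b k * q k * cpc k) / B) :=
      lt_of_lt_of_le one_pos (le_max_left _ _)
    exact div_le_div_of_nonneg_right (mul_le_mul_of_nonneg_left hclicks hc0) hd.le
      |>.trans_eq rfl
  refine ⟨?_, ?_, ?_⟩
  · intro k
    rw [hb'def k]
    by_cases h1 : k = i
    · rw [if_pos h1]
      exact ⟨by linarith [(hb i).1], by linarith⟩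
    · by_cases h2 : k = j
      · rw [if_neg h1, if_pos h2]
        exact ⟨by linarith, by linarith [(hb j).2]⟩
      · rw [if_neg h1, if_neg h2]; exact hb k
  · intro c hc0
    exact ⟨by rw [hcost], mul_le_mul_of_nonneg_left hclicks hc0, hval c hc0⟩
  · unfold propEv
    exact Finset.sum_le_sum fun c hcv =>
      mul_le_mul_of_nonneg_left (hval c (hc c hcv)) (hp c hcv)
end

section
/- (Evaluation formula in the proportional model.) Let b be a solution with Σ_i b_i q_i > 0 and Σ_i b_i q_i cpc_i > 0, and set c* = B/(Σ_i b_i q_i cpc_i). Then E[value(b)] = (Σ_i b_i q_i)·(Σ_{c ≤ c*} c·p(c)) + (B·(Σ_i b_i q_i)/(Σ_i b_i q_i cpc_i))·(Σ_{c > c*} p(c)), where both sums over c range over the finitely many possible values of the total click count C. -/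
open Finset

/-- **Evaluation formula in the proportional model.** With `c* = B / (∑ i, b i * q i * cpc i)`,
the expected value of `b` equals
`(∑ i, b i * q i) * (∑_{c ≤ c*} c * p c) + (B * (∑ i, b i * q i) / (∑ i, b i * q i * cpc i)) * Pr[C > c*]`. -/
theorem stmt_3 (n : ℕ) (B : ℝ) (hB : 0 < B)
    (cpc q : Fin n → ℝ) (hcpc : ∀ i, 0 ≤ cpc i)
    (hq : ∀ i, 0 ≤ q i) (hqsum : ∑ i, q i = 1)
    (cvals : Finset ℝ) (p : ℝ → ℝ)
    (hc : ∀ c ∈ cvals, (0:ℝ) ≤ c) (hp : ∀ c ∈ cvals, 0 ≤ p c)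
    (hpsum : ∑ c ∈ cvals, p c = 1)
    (b : Fin n → ℝ) (hb : ∀ i, 0 ≤ b i ∧ b i ≤ 1)
    (h1 : 0 < ∑ i, b i * q i) (h2 : 0 < ∑ i, b i * q i * cpc i) :
    propEv n B cpc q cvals p b =
      (∑ i, b i * q i) *
          (∑ c ∈ cvals.filter (fun c => c ≤ B / ∑ i, b i * q i * cpc i), c * p c) +
        (B * (∑ i, b i * q i) / ∑ i, b i * q i * cpc i) *
          (∑ c ∈ cvals.filter (fun c => B / (∑ i, b i * q i * cpc i) < c), p c) := by
  set S := ∑ i, b i * q i with hS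
  set T := ∑ i, b i * q i * cpc i with hT
  have hsplit := Finset.sum_filter_add_sum_filter_not cvals (fun c => c ≤ B / T)
    (fun c => p c * ((c * S) / max 1 ((c * T) / B)))
  rw [propEv, ← hsplit]
  have heq1 : ∑ c ∈ cvals.filter (fun c => c ≤ B / T),
      p c * ((c * S) / max 1 ((c * T) / B)) =
      S * ∑ c ∈ cvals.filter (fun c => c ≤ B / T), c * p c := by
    rw [Finset.mul_sum]
    apply Finset.sum_congr rfl
    intro c hcmem
    rw [Finset.mem_filter] at hcmem
    have hle : (c * T) / B ≤ 1 := by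
      rw [div_le_one hB]
      calc c * T ≤ (B / T) * T := by
            apply mul_le_mul_of_nonneg_right hcmem.2 h2.le
        _ = B := by field_simp
    rw [max_eq_left hle]
    ring
  have heq2 : ∑ c ∈ cvals.filter (fun c => ¬ c ≤ B / T),
      p c * ((c * S) / max 1 ((c * T) / B)) =
      (B * S / T) * ∑ c ∈ cvals.filter (fun c => B / T < c), p c := by
    rw [Finset.mul_sum]
    have : cvals.filter (fun c => ¬ c ≤ B / T) = cvals.filter (fun c => B / T < c) := by
      apply Finset.filter_congr
      intro c _
      simp [not_le]
    rw [this]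
    apply Finset.sum_congr rfl
    intro c hcmem
    rw [Finset.mem_filter] at hcmem
    have hcpos : 0 < c := lt_trans (div_pos hB h2) hcmem.2
    have hgt : 1 < (c * T) / B := by
      rw [lt_div_iff₀ hB, one_mul]
      calc B = (B / T) * T := by field_simp
        _ < c * T := by apply mul_lt_mul_of_pos_right hcmem.2 h2
    rw [max_eq_right hgt.le]
    have hcT : c * T ≠ 0 := by positivity
    field_simp
  rw [heq1, heq2]
end

section
/- In the independent model, let b be an integer solution bidding on a nonempty set S with E[value(b)] > 0, let i*(b) be the minimum index i* such that Σ_σ p(σ)·Σ_{i∈S, i≤i*} clicksbar_S^σ(i) ≥ (1/2)·E[value(b)], and let b_U be the integer solution bidding on U = {i ∈ S : i ≤ i*(b)}. Then E[value(b_U)] ≥ (1/2)·E[value(b)]. -/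
open Finset

/-- Cost incurred in event `σ` by the integer solution bidding on `S`. -/
noncomputable def costS {n : ℕ} (cpc : Fin n → ℝ) (S : Finset (Fin n)) (σ : Fin n → ℝ) : ℝ :=
  ∑ i ∈ S, cpc i * σ i

/-- Effective number of clicks obtained from keyword `i` in event `σ` by the integer
solution bidding on `S`, with budget `B`. -/
noncomputable def clicksbar {n : ℕ} (cpc : Fin n → ℝ) (B : ℝ) (S : Finset (Fin n))
    (σ : Fin n → ℝ) (i : Fin n) : ℝ :=
  σ i / max 1 (costS cpc S σ / B)

/-- Expected value, in the independent model, of the integer solution bidding on `S`: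
keyword `i` receives `c ∈ Ci i` clicks with probability `p i c`, independently. -/
noncomputable def EvI {n : ℕ} (cpc : Fin n → ℝ) (B : ℝ) (Ci : Fin n → Finset ℝ)
    (p : Fin n → ℝ → ℝ) (S : Finset (Fin n)) : ℝ :=
  ∑ σ ∈ Fintype.piFinset Ci, (∏ i, p i (σ i)) * ∑ i ∈ S, clicksbar cpc B S σ i

/-- Expected amount of money spent by the integer solution bidding on `S`. -/
noncomputable def spendI {n : ℕ} (cpc : Fin n → ℝ) (B : ℝ) (Ci : Fin n → Finset ℝ)
    (p : Fin n → ℝ → ℝ) (S : Finset (Fin n)) : ℝ :=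
  ∑ σ ∈ Fintype.piFinset Ci, (∏ i, p i (σ i)) * ∑ i ∈ S, cpc i * clicksbar cpc B S σ i

/-- **Independent model: truncation keeps half the value.** If `istar` is the minimum index
such that the keywords of `S` up to `istar` account for at least half of the expected value,
then the solution bidding on `U = {i ∈ S : i ≤ istar}` has expected value at least
`(1/2) E[value(b)]`. -/
theorem stmt_6 {n : ℕ} (B : ℝ) (hB : 0 < B)
    (cpc : Fin n → ℝ) (hcpc : ∀ i, 0 ≤ cpc i)
    (Ci : Fin n → Finset ℝ) (p : Fin n → ℝ → ℝ)
    (hclicks : ∀ i, ∀ c ∈ Ci i, (0:ℝ) ≤ c)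
    (hp : ∀ i, ∀ c ∈ Ci i, 0 ≤ p i c)
    (hpsum : ∀ i, ∑ c ∈ Ci i, p i c = 1)
    (S : Finset (Fin n)) (hS : S.Nonempty) (hEv : 0 < EvI cpc B Ci p S)
    (istar : Fin n)
    (histar : (1 / 2) * EvI cpc B Ci p S ≤
      ∑ σ ∈ Fintype.piFinset Ci, (∏ i, p i (σ i)) *
        ∑ i ∈ S.filter (fun i => i ≤ istar), clicksbar cpc B S σ i)
    (hmin : ∀ j : Fin n, j < istar →
      ¬ ((1 / 2) * EvI cpc B Ci p S ≤
        ∑ σ ∈ Fintype.piFinset Ci, (∏ i, p i (σ i)) *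
          ∑ i ∈ S.filter (fun i => i ≤ j), clicksbar cpc B S σ i)) :
    (1 / 2) * EvI cpc B Ci p S ≤ EvI cpc B Ci p (S.filter (fun i => i ≤ istar)) := by
  refine le_trans histar ?_
  unfold EvI
  apply Finset.sum_le_sum
  intro σ hσ
  have hσmem : ∀ i, σ i ∈ Ci i := fun i => (Fintype.mem_piFinset.mp hσ) i
  have hσnn : ∀ i, 0 ≤ σ i := fun i => hclicks i _ (hσmem i)
  have hpnn : 0 ≤ ∏ i, p i (σ i) :=
    Finset.prod_nonneg fun i _ => hp i _ (hσmem i)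
  apply mul_le_mul_of_nonneg_left _ hpnn
  apply Finset.sum_le_sum
  intro i hi
  unfold clicksbar
  have hcost : costS cpc (S.filter (fun i => i ≤ istar)) σ ≤ costS cpc S σ := by
    apply Finset.sum_le_sum_of_subset_of_nonneg (Finset.filter_subset _ _)
    intro j _ _
    exact mul_nonneg (hcpc j) (hσnn j)
  have h1 : (0:ℝ) < max 1 (costS cpc (S.filter (fun i => i ≤ istar)) σ / B) :=
    lt_of_lt_of_le one_pos (le_max_left _ _)
  apply div_le_div_of_nonneg_left (hσnn i) h1
  exact max_le_max le_rfl (div_le_div_of_nonneg_right hcost hB.le)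
end

section
/- In the independent model, assume cpc_1 ≤ cpc_2 ≤ … ≤ cpc_n. Let b be an integer solution bidding on a nonempty set S with E[value(b)] > 0, let cpc* be its average cost per click, and let i*(b) be the minimum index i* such that Σ_σ p(σ)·Σ_{i∈S, i≤i*} clicksbar_S^σ(i) ≥ (1/2)·E[value(b)]. Then cpc_{i*(b)} ≤ 2·cpc*. -/
open Finset

/-- **Independent model: the half-clicks index is cheap.** If keywords are sorted by
nondecreasing cost-per-click and `istar` is the minimum index such that the keywords of `S`
up to `istar` account for at least half of the expected value, then
`cpc istar ≤ 2 * cpc*`, where `cpc* = spendI / EvI` is the average cost per click of `b`. -/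
theorem stmt_7 {n : ℕ} (B : ℝ) (hB : 0 < B)
    (cpc : Fin n → ℝ) (hcpc : ∀ i, 0 ≤ cpc i) (hsorted : Monotone cpc)
    (Ci : Fin n → Finset ℝ) (p : Fin n → ℝ → ℝ)
    (hclicks : ∀ i, ∀ c ∈ Ci i, (0:ℝ) ≤ c)
    (hp : ∀ i, ∀ c ∈ Ci i, 0 ≤ p i c)
    (hpsum : ∀ i, ∑ c ∈ Ci i, p i c = 1)
    (S : Finset (Fin n)) (hS : S.Nonempty) (hEv : 0 < EvI cpc B Ci p S)
    (istar : Fin n)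
    (histar : (1 / 2) * EvI cpc B Ci p S ≤
      ∑ σ ∈ Fintype.piFinset Ci, (∏ i, p i (σ i)) *
        ∑ i ∈ S.filter (fun i => i ≤ istar), clicksbar cpc B S σ i)
    (hmin : ∀ j : Fin n, j < istar →
      ¬ ((1 / 2) * EvI cpc B Ci p S ≤
        ∑ σ ∈ Fintype.piFinset Ci, (∏ i, p i (σ i)) *
          ∑ i ∈ S.filter (fun i => i ≤ j), clicksbar cpc B S σ i)) :
    cpc istar ≤ 2 * (spendI cpc B Ci p S / EvI cpc B Ci p S) := by
  classical
  set E := EvI cpc B Ci p S with hEdef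
  have hw : ∀ σ ∈ Fintype.piFinset Ci, (0:ℝ) ≤ ∏ i, p i (σ i) := by
    intro σ hσ
    exact Finset.prod_nonneg fun i _ => hp i _ (Fintype.mem_piFinset.mp hσ i)
  have hcl : ∀ σ ∈ Fintype.piFinset Ci, ∀ i : Fin n, 0 ≤ clicksbar cpc B S σ i := by
    intro σ hσ i
    unfold clicksbar
    exact div_nonneg (hclicks i _ (Fintype.mem_piFinset.mp hσ i))
      (le_trans zero_le_one (le_max_left _ _))
  -- the part of the expected value coming from indices < istar
  set A := ∑ σ ∈ Fintype.piFinset Ci, (∏ i, p i (σ i)) *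
      ∑ i ∈ S.filter (fun i => i < istar), clicksbar cpc B S σ i with hAdef
  have hA : A ≤ (1/2) * E := by
    rcases eq_or_ne (istar : ℕ) 0 with h0 | h0
    · have hempty : S.filter (fun i => i < istar) = ∅ := by
        apply Finset.filter_false_of_mem
        intro i _
        simp only [not_lt]
        exact Fin.le_def.mpr (by omega)
      rw [hAdef, hempty]
      simp only [Finset.sum_empty, mul_zero, Finset.sum_const_zero]
      positivity
    · set j : Fin n := ⟨(istar : ℕ) - 1, lt_of_le_of_lt (Nat.pred_le _) istar.isLt⟩ with hjdef
      have hjlt : j < istar := by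
        rw [Fin.lt_def]; simp [hjdef]; omega
      have hiff : ∀ i : Fin n, i < istar ↔ i ≤ j := by
        intro i
        rw [Fin.lt_def, Fin.le_def]
        simp [hjdef]; omega
      have hfilt : S.filter (fun i => i < istar) = S.filter (fun i => i ≤ j) := by
        apply Finset.filter_congr
        intro i _
        simp [hiff i]
      have := hmin j hjlt
      rw [hAdef, hfilt]
      linarith [lt_of_not_ge this]
  -- the tail part
  set T := ∑ σ ∈ Fintype.piFinset Ci, (∏ i, p i (σ i)) *
      ∑ i ∈ S.filter (fun i => ¬ i < istar), clicksbar cpc B S σ i with hTdef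
  have hsplit : A + T = E := by
    rw [hAdef, hTdef, hEdef, EvI, ← Finset.sum_add_distrib]
    apply Finset.sum_congr rfl
    intro σ _
    rw [← mul_add, Finset.sum_filter_add_sum_filter_not]
  have hT : (1/2) * E ≤ T := by linarith
  -- the spend bound
  have hspend : cpc istar * T ≤ spendI cpc B Ci p S := by
    rw [hTdef, spendI, Finset.mul_sum]
    apply Finset.sum_le_sum
    intro σ hσ
    rw [mul_comm (cpc istar), mul_assoc, Finset.sum_mul]
    apply mul_le_mul_of_nonneg_left _ (hw σ hσ)
    calc (∑ i ∈ S.filter (fun i => ¬ i < istar), clicksbar cpc B S σ i * cpc istar)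
        ≤ ∑ i ∈ S.filter (fun i => ¬ i < istar), cpc i * clicksbar cpc B S σ i := by
          apply Finset.sum_le_sum
          intro i hi
          rw [mul_comm]
          have : istar ≤ i := le_of_not_gt (Finset.mem_filter.mp hi).2
          exact mul_le_mul_of_nonneg_right (hsorted this) (hcl σ hσ i)
      _ ≤ ∑ i ∈ S, cpc i * clicksbar cpc B S σ i := by
          apply Finset.sum_le_sum_of_subset_of_nonneg (Finset.filter_subset _ _)
          intro i _ _
          exact mul_nonneg (hcpc i) (hcl σ hσ i)
  have hkey : cpc istar * ((1/2) * E) ≤ spendI cpc B Ci p S := by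
    calc cpc istar * ((1/2) * E) ≤ cpc istar * T :=
          mul_le_mul_of_nonneg_left hT (hcpc istar)
      _ ≤ spendI cpc B Ci p S := hspend
  rw [mul_div_assoc'] at *
  rw [le_div_iff₀ hEv]
  nlinarith [hkey]
end

section
/- (Per-event inequality.) Let U and N be disjoint finite sets of keywords with union V, let B > 0, let γ > 0, and suppose each keyword i ∈ V has cost-per-click 0 ≤ cpc_i ≤ 2γ and realized click count x_i ≥ 0. For a set X of keywords write cost(X) = Σ_{i∈X} cpc_i·x_i and clicksbar(X) = (Σ_{i∈X} x_i)/max(1, cost(X)/B). Let α = min(B, cost(N))/B. Then clicksbar(V) ≥ α·B/(2γ) + (1−α)·clicksbar(U). -/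
lemma aux_ineq (B γ cU cN sU sN : ℝ) (hB : 0 < B) (hγ : 0 < γ)
    (hcU : 0 ≤ cU) (hcN : 0 ≤ cN) (hsU : 0 ≤ sU) (hsN : 0 ≤ sN)
    (hU : cU ≤ 2*γ*sU) (hN : cN ≤ 2*γ*sN) :
    min B cN / B * B / (2*γ) + (1 - min B cN / B) * (sU / max 1 (cU/B)) ≤
      (sU+sN) / max 1 ((cU+cN)/B) := by
  rcases le_total B cN with hBcN | hcNB
  · -- α = 1
    rw [min_eq_left hBcN, div_self hB.ne']
    have hVB : (1:ℝ) ≤ (cU+cN)/B := by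
      rw [le_div_iff₀ hB]; linarith
    rw [max_eq_right hVB]
    have hpos : (0:ℝ) < cU + cN := by linarith
    rw [div_div_eq_mul_div]
    simp only [sub_self, zero_mul, add_zero, one_mul]
    rw [div_le_div_iff₀ (by positivity : (0:ℝ) < 2*γ) hpos]
    nlinarith [mul_nonneg hsU hγ.le]
  · rw [min_eq_right hcNB]
    rcases le_total (cU + cN) B with hVB | hBV
    · -- both maxes are 1
      have h1 : (cU+cN)/B ≤ 1 := by rw [div_le_one hB]; linarith
      have h2 : cU/B ≤ 1 := by rw [div_le_one hB]; linarith
      rw [max_eq_left h1, max_eq_left h2, div_one, div_one]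
      have : cN / B * B = cN := div_mul_cancel₀ cN hB.ne'
      rw [this]
      have h3 : cN/(2*γ) ≤ sN := by rw [div_le_iff₀ (by positivity : (0:ℝ) < 2*γ)]; linarith
      have h4 : 0 ≤ cN/B*sU := by positivity
      nlinarith [h3, h4]
    · have h1 : (1:ℝ) ≤ (cU+cN)/B := by rw [le_div_iff₀ hB]; linarith
      rw [max_eq_right h1, div_div_eq_mul_div]
      have hVpos : (0:ℝ) < cU + cN := by linarith
      have hcnb : cN / B * B = cN := div_mul_cancel₀ cN hB.ne'
      rw [hcnb]
      rcases le_total cU B with hUB | hBU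
      · -- case B2
        have h2 : cU/B ≤ 1 := by rw [div_le_one hB]; linarith
        rw [max_eq_left h2, div_one, one_sub_div hB.ne', div_mul_eq_mul_div,
            div_add_div _ _ (by positivity : (2:ℝ)*γ ≠ 0) hB.ne',
            div_le_div_iff₀ (by positivity : (0:ℝ) < 2*γ*B) hVpos]
        have hbr : 0 ≤ cN*(cU+cN) - B*(cU+cN-B) := by nlinarith [mul_nonneg (sub_nonneg.2 hcNB) (sub_nonneg.2 hUB)]
        nlinarith [mul_nonneg (mul_nonneg hB.le hB.le) (sub_nonneg.2 hN),
          mul_nonneg (sub_nonneg.2 hU) hbr,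
          mul_nonneg (mul_nonneg hVpos.le (sub_nonneg.2 hUB)) (sub_nonneg.2 hcNB),
          mul_pos hB hγ, hB.ne']
      · -- case B3
        have h2 : (1:ℝ) ≤ cU/B := by rw [le_div_iff₀ hB]; linarith
        rw [max_eq_right h2, div_div_eq_mul_div]
        have hUpos : (0:ℝ) < cU := by linarith
        rw [one_sub_div hB.ne', div_mul_div_comm,
            div_add_div _ _ (by positivity : (2:ℝ)*γ ≠ 0) (by positivity : B*cU ≠ 0),
            div_le_div_iff₀ (by positivity : (0:ℝ) < 2*γ*(B*cU)) hVpos]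
        nlinarith [mul_nonneg (mul_nonneg (mul_nonneg hB.le hB.le) hUpos.le) (sub_nonneg.2 hN),
          mul_nonneg (mul_nonneg (mul_nonneg hB.le hcN) (by linarith : (0:ℝ) ≤ cU+cN-B)) (sub_nonneg.2 hU)]


open Finset

/-- **Per-event inequality.** If `U` and `N` are disjoint sets of keywords, every keyword in
`V = U ∪ N` has cost-per-click at most `2γ` and nonnegative realized clicks, and
`α = min(B, cost N)/B`, then the effective clicks of `V` are at least
`α·B/(2γ) + (1−α)·(effective clicks of U)`. -/
theorem stmt_8 {ι : Type*} [Fintype ι] [DecidableEq ι]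
    (U N : Finset ι) (hUN : Disjoint U N)
    (B γ : ℝ) (hB : 0 < B) (hγ : 0 < γ)
    (cpc x : ι → ℝ)
    (hcpc : ∀ i ∈ U ∪ N, 0 ≤ cpc i ∧ cpc i ≤ 2 * γ)
    (hx : ∀ i ∈ U ∪ N, 0 ≤ x i) :
    let cost : Finset ι → ℝ := fun X => ∑ i ∈ X, cpc i * x i
    let clicksbar : Finset ι → ℝ := fun X => (∑ i ∈ X, x i) / max 1 (cost X / B)
    let α : ℝ := min B (cost N) / B
    α * B / (2 * γ) + (1 - α) * clicksbar U ≤ clicksbar (U ∪ N) := by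
  intro cost clicksbar α
  have hxU : ∀ i ∈ U, 0 ≤ x i := fun i hi => hx i (mem_union_left _ hi)
  have hxN : ∀ i ∈ N, 0 ≤ x i := fun i hi => hx i (mem_union_right _ hi)
  have hcU : 0 ≤ cost U := Finset.sum_nonneg fun i hi =>
    mul_nonneg (hcpc i (mem_union_left _ hi)).1 (hxU i hi)
  have hcN : 0 ≤ cost N := Finset.sum_nonneg fun i hi =>
    mul_nonneg (hcpc i (mem_union_right _ hi)).1 (hxN i hi)
  have hsU : (0:ℝ) ≤ ∑ i ∈ U, x i := Finset.sum_nonneg hxU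
  have hsN : (0:ℝ) ≤ ∑ i ∈ N, x i := Finset.sum_nonneg hxN
  have hU2 : cost U ≤ 2*γ*(∑ i ∈ U, x i) := by
    rw [Finset.mul_sum]
    exact Finset.sum_le_sum fun i hi =>
      mul_le_mul_of_nonneg_right (hcpc i (mem_union_left _ hi)).2 (hxU i hi)
  have hN2 : cost N ≤ 2*γ*(∑ i ∈ N, x i) := by
    rw [Finset.mul_sum]
    exact Finset.sum_le_sum fun i hi =>
      mul_le_mul_of_nonneg_right (hcpc i (mem_union_right _ hi)).2 (hxN i hi)
  have hcostV : cost (U ∪ N) = cost U + cost N := Finset.sum_union hUN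
  have hsV : (∑ i ∈ U ∪ N, x i) = (∑ i ∈ U, x i) + (∑ i ∈ N, x i) := Finset.sum_union hUN
  have := aux_ineq B γ (cost U) (cost N) (∑ i ∈ U, x i) (∑ i ∈ N, x i)
    hB hγ hcU hcN hsU hsN hU2 hN2
  simpa only [clicksbar, α, hcostV, hsV] using this
end

section
/- In the gap instance with parameters c > 1, n ≥ 1 and B > 0, the integer solution b^odd that bids b_i = 1 for all odd i and b_i = 0 for all even i satisfies E[value(b^odd)] = n·α·B, and it is optimal: every solution b with 0 ≤ b_i ≤ 1 satisfies E[value(b)] ≤ n·α·B. -/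
open Finset

/-- Value obtained in scenario `σ` of the gap instance: there are `2n` keywords with
`cpc i = c^i`; in scenario `σ ∈ {1,…,n}` keywords `2σ−1` and `2σ` each receive
`B / c^(2σ−1)` clicks and all other keywords receive none. -/
noncomputable def gapVal (c B : ℝ) (n : ℕ) (b : ℕ → ℝ) (σ : ℕ) : ℝ :=
  (∑ i ∈ Finset.Icc 1 (2 * n),
      b i * (if i = 2 * σ - 1 ∨ i = 2 * σ then B / c ^ (2 * σ - 1) else 0)) /
    max 1 ((∑ i ∈ Finset.Icc 1 (2 * n),
      b i * c ^ i * (if i = 2 * σ - 1 ∨ i = 2 * σ then B / c ^ (2 * σ - 1) else 0)) / B)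

/-- Expected value in the gap instance: scenario `σ` has probability `α · c^(2σ−1)`,
where `α = 1 / ∑_{τ=1}^n c^(2τ−1)`. -/
noncomputable def gapEv (c B : ℝ) (n : ℕ) (b : ℕ → ℝ) : ℝ :=
  ∑ σ ∈ Finset.Icc 1 n,
    ((∑ τ ∈ Finset.Icc 1 n, c ^ (2 * τ - 1))⁻¹ * c ^ (2 * σ - 1)) * gapVal c B n b σ

/-
In scenario `σ` only keywords `2σ - 1` and `2σ` get clicks, `B / c^(2σ - 1)` each, and keyword `2σ`
costs `c ≥ 1` times as much as keyword `2σ - 1`. Hence the clicks a bid vector buys never exceed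
its spend divided by `c^(2σ - 1)`, so capping the spend at the budget caps the value at
`B / c^(2σ - 1)`; the odd bid vector spends exactly `B` and attains the cap. The probability
`α · c^(2σ - 1)` turns every scenario's cap into `α · B`.
-/

theorem Finset.sum_mul_ite_or_eq {ι R : Type*} [DecidableEq ι] [NonUnitalNonAssocSemiring R]
    (s : Finset ι) (f : ι → R) (t : R) {a b : ι} (ha : a ∈ s) (hb : b ∈ s) (hab : a ≠ b) :
    ∑ i ∈ s, f i * (if i = a ∨ i = b then t else 0) = f a * t + f b * t := by
  have hfilter : s.filter (fun i => i = a ∨ i = b) = {a, b} := by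
    ext i
    simp only [mem_filter, mem_insert, mem_singleton]
    constructor
    · exact fun h => h.2
    · rintro (rfl | rfl) <;> simp [ha, hb]
  simp_rw [mul_ite, mul_zero]
  rw [← sum_filter, hfilter, sum_pair hab]

theorem add_div_max_one_add_mul_le_one {x y c : ℝ} (hc : 1 ≤ c) (hy : 0 ≤ y) :
    (x + y) / max 1 (x + c * y) ≤ 1 :=
  div_le_one_of_le₀ ((by nlinarith : x + y ≤ x + c * y).trans (le_max_right _ _))
    (zero_le_one.trans (le_max_left _ _))

theorem sum_mul_pow_mul_div_pow (s : Finset ℕ) (α c B : ℝ) (hc : c ≠ 0) (k : ℕ → ℕ) :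
    ∑ σ ∈ s, α * c ^ k σ * (B / c ^ k σ) = s.card * α * B := by
  have hterm : ∀ σ ∈ s, α * c ^ k σ * (B / c ^ k σ) = α * B := fun σ _ => by field_simp
  rw [sum_congr rfl hterm, sum_const, nsmul_eq_mul, mul_assoc]

theorem gapVal_eq {c B : ℝ} (hc : c ≠ 0) (hB : B ≠ 0) {n σ : ℕ} (b : ℕ → ℝ)
    (hσ : σ ∈ Icc 1 n) :
    gapVal c B n b σ =
      (b (2 * σ - 1) + b (2 * σ)) * (B / c ^ (2 * σ - 1)) /
        max 1 (b (2 * σ - 1) + c * b (2 * σ)) := by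
  rw [mem_Icc] at hσ
  have hodd : 2 * σ - 1 ∈ Icc 1 (2 * n) := mem_Icc.2 ⟨by omega, by omega⟩
  have heven : 2 * σ ∈ Icc 1 (2 * n) := mem_Icc.2 ⟨by omega, by omega⟩
  have hne : 2 * σ - 1 ≠ 2 * σ := by omega
  have hpow : c ^ (2 * σ) = c ^ (2 * σ - 1) * c := by
    rw [← pow_succ, Nat.sub_add_cancel (by omega)]
  unfold gapVal
  rw [sum_mul_ite_or_eq _ b _ hodd heven hne,
    sum_mul_ite_or_eq _ (fun i => b i * c ^ i) _ hodd heven hne, hpow]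
  congr 2
  · ring
  · field_simp

theorem gapVal_le {c B : ℝ} (hc : 1 ≤ c) (hB : 0 < B) {n σ : ℕ} {b : ℕ → ℝ}
    (hb : 0 ≤ b (2 * σ)) (hσ : σ ∈ Icc 1 n) :
    gapVal c B n b σ ≤ B / c ^ (2 * σ - 1) := by
  rw [gapVal_eq (by positivity) hB.ne' b hσ, mul_comm, mul_div_assoc]
  exact mul_le_of_le_one_right (by positivity) (add_div_max_one_add_mul_le_one hc hb)

theorem gapVal_odd {c B : ℝ} (hc : c ≠ 0) (hB : B ≠ 0) {n σ : ℕ} (hσ : σ ∈ Icc 1 n) :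
    gapVal c B n (fun i => if Odd i then 1 else 0) σ = B / c ^ (2 * σ - 1) := by
  have hodd : Odd (2 * σ - 1) := by
    rw [Nat.odd_iff]
    have := (mem_Icc.1 hσ).1
    omega
  have heven : ¬Odd (2 * σ) := by simp [Nat.not_odd_iff_even]
  rw [gapVal_eq hc hB _ hσ]
  simp [hodd, heven]

theorem stmt_10_general (c : ℝ) (hc : 1 < c) (n : ℕ) (B : ℝ) (hB : 0 < B) :
    gapEv c B n (fun i => if Odd i then 1 else 0) =
      n * (∑ τ ∈ Finset.Icc 1 n, c ^ (2 * τ - 1))⁻¹ * B ∧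
    ∀ b : ℕ → ℝ, (∀ i, 0 ≤ b i ∧ b i ≤ 1) →
      gapEv c B n b ≤ n * (∑ τ ∈ Finset.Icc 1 n, c ^ (2 * τ - 1))⁻¹ * B := by
  have hc0 : 0 < c := zero_lt_one.trans hc
  have hbound := sum_mul_pow_mul_div_pow (Icc 1 n) (∑ τ ∈ Icc 1 n, c ^ (2 * τ - 1))⁻¹ c B
    hc0.ne' (fun σ => 2 * σ - 1)
  rw [Nat.card_Icc, Nat.add_sub_cancel] at hbound
  refine ⟨?_, fun b hb => ?_⟩
  · rw [← hbound]
    exact sum_congr rfl fun σ hσ => by rw [gapVal_odd hc0.ne' hB.ne' hσ]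
  · rw [← hbound]
    exact sum_le_sum fun σ hσ =>
      mul_le_mul_of_nonneg_left (gapVal_le hc.le hB (hb _).1 hσ) (by positivity)

/-- **Gap instance: bidding on the odd keywords is optimal**, with expected value `n·α·B`. -/
theorem stmt_10 (c : ℝ) (hc : 1 < c) (n : ℕ) (hn : 1 ≤ n) (B : ℝ) (hB : 0 < B) :
    gapEv c B n (fun i => if Odd i then 1 else 0) =
      n * (∑ τ ∈ Finset.Icc 1 n, c ^ (2 * τ - 1))⁻¹ * B ∧
    ∀ b : ℕ → ℝ, (∀ i, 0 ≤ b i ∧ b i ≤ 1) →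
      gapEv c B n b ≤ n * (∑ τ ∈ Finset.Icc 1 n, c ^ (2 * τ - 1))⁻¹ * B :=
  stmt_10_general c hc n B hB
end

section
/- In the gap instance with parameters c > 1, n ≥ 1 and B > 0, every fractional prefix solution b satisfies E[value(b)] ≤ n·α·B·(2/(c+1) + 1/n). Hence the ratio between the optimal expected value n·α·B and the best expected value of a fractional prefix solution is at least 1/(2/(c+1) + 1/n), which tends to infinity as c and n grow. -/
open Finset

/-!
In scenario `σ` only the pair of keywords `2σ−1, 2σ` matters, and after the factor `c^(2σ−1)` of
its probability cancels the click volume `B / c^(2σ−1)`, the scenario contributes `α·B` times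
`(x + y) / max 1 (x + c·y)`, where `(x, y)` are the bids on the pair. A prefix solution bids
`(1, 1)` on every pair below the pair of `i*`, giving `2/(c+1)`, bids `(0, 0)` above it, and on
that pair earns at most `1`. Summing over the `n` scenarios gives `n·(2/(c+1)) + 1`.
-/

lemma Finset.sum_ite_eq_or_eq {ι M : Type*} [DecidableEq ι] [AddCommMonoid M] {s : Finset ι}
    {a a' : ι} (h : a ≠ a') (ha : a ∈ s) (ha' : a' ∈ s) (g : ι → M) :
    ∑ i ∈ s, (if i = a ∨ i = a' then g i else 0) = g a + g a' := by
  have hpair : s ∩ {a, a'} = {a, a'} := inter_eq_right.mpr (insert_subset ha (by simpa))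
  rw [← sum_pair h, ← hpair, ← sum_ite_mem]
  simp only [mem_insert, mem_singleton]

noncomputable def pairValue (c x y : ℝ) : ℝ := (x + y) / max 1 (x + c * y)

lemma pairValue_one_one {c : ℝ} (hc : 0 ≤ c) : pairValue c 1 1 = 2 / (c + 1) := by
  rw [pairValue, mul_one, max_eq_right (by linarith)]
  ring

lemma pairValue_zero_zero (c : ℝ) : pairValue c 0 0 = 0 := by
  simp [pairValue]

lemma pairValue_le_one {c x y : ℝ} (hc : 1 ≤ c) (hy : 0 ≤ y) : pairValue c x y ≤ 1 :=
  (div_le_one (zero_lt_one.trans_le (le_max_left _ _))).mpr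
    (le_max_of_le_right (by nlinarith))

lemma gapVal_eq_pairValue {c B : ℝ} (hc : c ≠ 0) (hB : B ≠ 0) {n : ℕ} (b : ℕ → ℝ) {σ : ℕ}
    (hσ : σ ∈ Icc 1 n) :
    gapVal c B n b σ = B / c ^ (2 * σ - 1) * pairValue c (b (2 * σ - 1)) (b (2 * σ)) := by
  rw [mem_Icc] at hσ
  have hne : 2 * σ - 1 ≠ 2 * σ := by omega
  have hodd : 2 * σ - 1 ∈ Icc 1 (2 * n) := mem_Icc.mpr (by omega)
  have heven : 2 * σ ∈ Icc 1 (2 * n) := mem_Icc.mpr (by omega)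
  have hpow : c ^ (2 * σ) = c * c ^ (2 * σ - 1) := by
    rw [← pow_succ', Nat.sub_add_cancel (by omega)]
  have hck : c ^ (2 * σ - 1) ≠ 0 := pow_ne_zero _ hc
  simp only [gapVal, pairValue, mul_ite, mul_zero, sum_ite_eq_or_eq hne hodd heven, hpow]
  have hload : (b (2 * σ - 1) * c ^ (2 * σ - 1) * (B / c ^ (2 * σ - 1)) +
      b (2 * σ) * (c * c ^ (2 * σ - 1)) * (B / c ^ (2 * σ - 1))) / B =
      b (2 * σ - 1) + c * b (2 * σ) := by
    field_simp
  rw [hload]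
  ring

lemma gapEv_eq_sum_pairValue {c B : ℝ} (hc : c ≠ 0) (hB : B ≠ 0) (n : ℕ) (b : ℕ → ℝ) :
    gapEv c B n b = (∑ τ ∈ Icc 1 n, c ^ (2 * τ - 1))⁻¹ * B *
      ∑ σ ∈ Icc 1 n, pairValue c (b (2 * σ - 1)) (b (2 * σ)) := by
  rw [gapEv, mul_sum]
  refine sum_congr rfl fun σ hσ => ?_
  rw [gapVal_eq_pairValue hc hB b hσ]
  field_simp

lemma sum_pairValue_le_of_prefix {c : ℝ} (hc : 1 ≤ c) {n : ℕ} {b : ℕ → ℝ} (hb : ∀ i, 0 ≤ b i)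
    {istar : ℕ} (hist : istar ∈ Icc 1 (2 * n))
    (hone : ∀ i ∈ Icc 1 (2 * n), i < istar → b i = 1)
    (hzero : ∀ i ∈ Icc 1 (2 * n), istar < i → b i = 0) :
    ∑ σ ∈ Icc 1 n, pairValue c (b (2 * σ - 1)) (b (2 * σ)) ≤ n * (2 / (c + 1)) + 1 := by
  rw [mem_Icc] at hist
  set σstar := (istar + 1) / 2
  have hσstar : σstar ∈ Icc 1 n := mem_Icc.mpr (by omega)
  have hterm : ∀ σ ∈ Icc 1 n, pairValue c (b (2 * σ - 1)) (b (2 * σ)) ≤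
      2 / (c + 1) + if σ = σstar then 1 else 0 := by
    intro σ hσ
    rw [mem_Icc] at hσ
    have hodd : 2 * σ - 1 ∈ Icc 1 (2 * n) := mem_Icc.mpr (by omega)
    have heven : 2 * σ ∈ Icc 1 (2 * n) := mem_Icc.mpr (by omega)
    have hgap : 0 ≤ 2 / (c + 1) := by positivity
    rcases lt_trichotomy σ σstar with hlt | rfl | hgt
    · rw [hone _ hodd (by omega), hone _ heven (by omega), pairValue_one_one (by linarith),
        if_neg hlt.ne]
      simp
    · rw [if_pos rfl]
      linarith [pairValue_le_one (x := b (2 * σstar - 1)) hc (hb (2 * σstar))]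
    · rw [hzero _ hodd (by omega), hzero _ heven (by omega), pairValue_zero_zero,
        if_neg hgt.ne']
      simpa using hgap
  calc ∑ σ ∈ Icc 1 n, pairValue c (b (2 * σ - 1)) (b (2 * σ))
      ≤ ∑ σ ∈ Icc 1 n, (2 / (c + 1) + if σ = σstar then 1 else 0) := sum_le_sum hterm
    _ = n * (2 / (c + 1)) + 1 := by
      rw [sum_add_distrib, sum_const, sum_ite_eq' _ _ (fun _ => (1 : ℝ)), if_pos hσstar,
        Nat.card_Icc, nsmul_eq_mul, Nat.add_sub_cancel]

theorem stmt_11_general (c : ℝ) (hc : 1 < c) (n : ℕ) (B : ℝ) (hB : 0 < B)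
    (b : ℕ → ℝ) (hb : ∀ i, 0 ≤ b i ∧ b i ≤ 1)
    (hpre : ∃ istar ∈ Finset.Icc 1 (2 * n),
      (∀ i ∈ Finset.Icc 1 (2 * n), i < istar → b i = 1) ∧
      ∀ i ∈ Finset.Icc 1 (2 * n), istar < i → b i = 0) :
    gapEv c B n b ≤
      n * (∑ τ ∈ Finset.Icc 1 n, c ^ (2 * τ - 1))⁻¹ * B * (2 / (c + 1) + 1 / n) ∧
    (0 < gapEv c B n b →
      1 / (2 / (c + 1) + 1 / n) ≤
        (n * (∑ τ ∈ Finset.Icc 1 n, c ^ (2 * τ - 1))⁻¹ * B) / gapEv c B n b) := by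
  obtain ⟨istar, hist, hone, hzero⟩ := hpre
  have hn : (n : ℝ) ≠ 0 := Nat.cast_ne_zero.mpr (by rw [mem_Icc] at hist; omega)
  have hsum := sum_pairValue_le_of_prefix hc.le (fun i => (hb i).1) hist hone hzero
  have hbound : gapEv c B n b ≤
      n * (∑ τ ∈ Icc 1 n, c ^ (2 * τ - 1))⁻¹ * B * (2 / (c + 1) + 1 / n) := by
    rw [gapEv_eq_sum_pairValue (zero_lt_one.trans hc).ne' hB.ne' n b]
    calc _ ≤ (∑ τ ∈ Icc 1 n, c ^ (2 * τ - 1))⁻¹ * B * (n * (2 / (c + 1)) + 1) :=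
          mul_le_mul_of_nonneg_left hsum (by positivity)
      _ = _ := by field_simp
  refine ⟨hbound, fun hpos => ?_⟩
  have hK : 0 < 2 / (c + 1) + 1 / n := by positivity
  rwa [div_le_div_iff₀ hK hpos, one_mul]

/-- **Gap instance: every fractional prefix solution is poor.** Its expected value is at most
`n·α·B·(2/(c+1) + 1/n)`; hence the ratio between the optimal expected value `n·α·B` and the
best expected value of a fractional prefix solution is at least `1/(2/(c+1) + 1/n)`. -/
theorem stmt_11 (c : ℝ) (hc : 1 < c) (n : ℕ) (hn : 1 ≤ n) (B : ℝ) (hB : 0 < B)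
    (b : ℕ → ℝ) (hb : ∀ i, 0 ≤ b i ∧ b i ≤ 1)
    (hpre : ∃ istar ∈ Finset.Icc 1 (2 * n),
      (∀ i ∈ Finset.Icc 1 (2 * n), i < istar → b i = 1) ∧
      ∀ i ∈ Finset.Icc 1 (2 * n), istar < i → b i = 0) :
    gapEv c B n b ≤
      n * (∑ τ ∈ Finset.Icc 1 n, c ^ (2 * τ - 1))⁻¹ * B * (2 / (c + 1) + 1 / n) ∧
    (0 < gapEv c B n b →
      1 / (2 / (c + 1) + 1 / n) ≤
        (n * (∑ τ ∈ Finset.Icc 1 n, c ^ (2 * τ - 1))⁻¹ * B) / gapEv c B n b) :=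
  stmt_11_general c hc n B hB b hb hpre
end

section
/- (Clique implies high value.) In the clique-reduction instance, assume 0 < ε, 0 ≤ δ ≤ 1, t ≥ 0, and 2 ≤ k ≤ n. If G contains a clique Q on k vertices, then the integer solution b with b_v = 1 for every vertex keyword v ∈ V_G, b_e = 1 for every edge keyword e of the clique Q, and b_e = 0 for all other edge keywords, satisfies E[value(b)] ≥ V = (1−δ)·K + (δ(n−k)/n)·(K/ε). -/
open Finset

/-- Value obtained in scenario `σ₀` of the clique-reduction instance (budget `Kr`):
every edge keyword receives one click and vertex keywords receive none; edge keywords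
have cost-per-click 1. -/
noncomputable def crVal0 {V : Type*} [Fintype V] [DecidableEq V] (G : SimpleGraph V)
    [DecidableRel G.Adj] (Kr : ℝ) (bE : Sym2 V → ℝ) : ℝ :=
  (∑ e ∈ G.edgeFinset, bE e * 1) /
    max 1 ((∑ e ∈ G.edgeFinset, bE e * 1 * 1) / Kr)

/-- Value obtained in scenario `σ_v` of the clique-reduction instance (budget `Kr`):
keyword `v` (cost-per-click `ε`) receives `Kr/ε` clicks, each edge keyword incident to `v`
(cost-per-click 1) receives `t` clicks, and all other keywords receive none. -/
noncomputable def crValv {V : Type*} [Fintype V] [DecidableEq V] (G : SimpleGraph V)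
    [DecidableRel G.Adj] (Kr ε t : ℝ) (bE : Sym2 V → ℝ) (bV : V → ℝ) (v : V) : ℝ :=
  (bV v * (Kr / ε) + ∑ e ∈ G.edgeFinset, bE e * (if v ∈ e then t else 0)) /
    max 1 ((bV v * ε * (Kr / ε) +
      ∑ e ∈ G.edgeFinset, bE e * 1 * (if v ∈ e then t else 0)) / Kr)

/-- Expected value in the clique-reduction instance: scenario `σ₀` has probability `1−δ`
and each scenario `σ_v` has probability `δ/n`, where `n` is the number of vertices. -/
noncomputable def crEv {V : Type*} [Fintype V] [DecidableEq V] (G : SimpleGraph V)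
    [DecidableRel G.Adj] (Kr ε δ t : ℝ) (bE : Sym2 V → ℝ) (bV : V → ℝ) : ℝ :=
  (1 - δ) * crVal0 G Kr bE +
    ∑ v : V, (δ / (Fintype.card V : ℝ)) * crValv G Kr ε t bE bV v

private lemma cr_card_lemma {V : Type*} [Fintype V] [DecidableEq V] (G : SimpleGraph V)
    [DecidableRel G.Adj] (k : ℕ) (Q : Finset V) (hQ : G.IsNClique k Q) :
    ((G.edgeFinset ∩ Q.sym2).card : ℝ) = k * (k - 1) / 2 := by
  have hT : G.edgeFinset ∩ Q.sym2 = Q.sym2.filter (fun e => ¬ e.IsDiag) := by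
    ext e
    induction e with
    | _ a b =>
      simp only [mem_inter, mem_filter, SimpleGraph.mem_edgeFinset, Sym2.isDiag_iff_proj_eq]
      constructor
      · rintro ⟨he, hs⟩
        exact ⟨hs, G.ne_of_adj (G.mem_edgeSet.1 he)⟩
      · rintro ⟨hs, hab⟩
        rw [mk_mem_sym2_iff] at hs
        exact ⟨G.mem_edgeSet.2 (hQ.1 hs.1 hs.2 hab), mk_mem_sym2_iff.2 hs⟩
  have hdiag : Q.sym2.filter (fun e => e.IsDiag) = Q.image Sym2.diag := by
    ext e
    induction e with
    | _ a b =>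
      simp only [mem_filter, mem_image, Sym2.isDiag_iff_proj_eq]
      constructor
      · rintro ⟨hs, rfl⟩
        rw [mk_mem_sym2_iff] at hs
        exact ⟨a, hs.1, rfl⟩
      · rintro ⟨x, hx, he⟩
        have : s(x, x) = s(a, b) := he
        rw [Sym2.eq_iff] at this
        rcases this with ⟨rfl, rfl⟩ | ⟨rfl, rfl⟩ <;>
          exact ⟨mk_mem_sym2_iff.2 ⟨hx, hx⟩, rfl⟩
  have hcd : (Q.sym2.filter (fun e => e.IsDiag)).card = k := by
    rw [hdiag, Finset.card_image_of_injective _ Sym2.diag_injective, hQ.2]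
  have hadd := Finset.card_filter_add_card_filter_not (s := Q.sym2)
      (p := fun e => e.IsDiag)
  rw [hcd, card_sym2, hQ.2] at hadd
  have hch : (k + 1).choose 2 = (k + 1) * k / 2 := by
    rw [Nat.choose_two_right]; simp
  have heven : 2 ∣ (k + 1) * k := by
    rw [mul_comm]; exact (Nat.even_mul_succ_self k).two_dvd
  rw [hT]
  rw [hch] at hadd
  have h2 : 2 * ((Q.sym2.filter (fun e => ¬ e.IsDiag)).card + k) = (k + 1) * k := by omega
  have h3 := congrArg (Nat.cast : ℕ → ℝ) h2
  push_cast at h3 ⊢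
  nlinarith [h3]

/-- **Clique implies high value.** If `G` contains a clique `Q` on `k` vertices, then the
integer solution bidding on all vertex keywords and exactly on the edge keywords of `Q`
has expected value at least `V = (1−δ)·K + (δ(n−k)/n)·(K/ε)`, where `K = k(k−1)/2`. -/
theorem stmt_14 {V : Type*} [Fintype V] [DecidableEq V] (G : SimpleGraph V)
    [DecidableRel G.Adj]
    (k : ℕ) (hk : 2 ≤ k) (hkn : k ≤ Fintype.card V) (hm : 1 ≤ G.edgeFinset.card)
    (ε δ t : ℝ) (hε : 0 < ε) (hδ0 : 0 ≤ δ) (hδ1 : δ ≤ 1) (ht : 0 ≤ t)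
    (Q : Finset V) (hQ : G.IsNClique k Q) :
    (1 - δ) * (k * (k - 1) / 2 : ℝ) +
        (δ * ((Fintype.card V : ℝ) - k) / (Fintype.card V : ℝ)) *
          ((k * (k - 1) / 2 : ℝ) / ε) ≤
      crEv G (k * (k - 1) / 2 : ℝ) ε δ t
        (fun e => if e ∈ Q.sym2 then 1 else 0) (fun _ => 1) := by
  set n : ℕ := Fintype.card V with hn
  set K : ℝ := (k * (k - 1) / 2 : ℝ) with hKdef
  have hK1 : (1 : ℝ) ≤ K := by
    have : (2 : ℝ) ≤ (k : ℝ) := by exact_mod_cast hk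
    rw [hKdef]; nlinarith
  have hK0 : (0 : ℝ) < K := lt_of_lt_of_le one_pos hK1
  have hn0 : (0 : ℝ) < (n : ℝ) := by
    have : 0 < n := lt_of_lt_of_le (by omega) hkn
    exact_mod_cast this
  -- the edge-bid sum equals K
  have hsum : ∑ e ∈ G.edgeFinset, (if e ∈ Q.sym2 then (1:ℝ) else 0) = K := by
    rw [Finset.sum_ite_mem, Finset.sum_const, nsmul_eq_mul, mul_one]
    exact cr_card_lemma G k Q hQ
  -- value in scenario σ₀
  have hVal0 : crVal0 G K (fun e => if e ∈ Q.sym2 then 1 else 0) = K := by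
    unfold crVal0
    simp only [mul_one]
    rw [hsum, div_self (ne_of_gt hK0), max_self, div_one]
  -- value in scenario σ_v for v ∉ Q
  have hValv_out : ∀ v : V, v ∉ Q →
      crValv G K ε t (fun e => if e ∈ Q.sym2 then 1 else 0) (fun _ => 1) v = K / ε := by
    intro v hv
    unfold crValv
    have hz : ∀ e ∈ G.edgeFinset,
        (if e ∈ Q.sym2 then (1:ℝ) else 0) * (if v ∈ e then t else 0) = 0 := by
      intro e _
      by_cases hQe : e ∈ Q.sym2
      · have hve : v ∉ e := fun hve => hv (Finset.mem_sym2_iff.1 hQe v hve)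
        simp [hQe, hve]
      · simp [hQe]
    have hz1 : ∑ e ∈ G.edgeFinset,
        (if e ∈ Q.sym2 then (1:ℝ) else 0) * (if v ∈ e then t else 0) = 0 :=
      Finset.sum_eq_zero hz
    have hz2 : ∑ e ∈ G.edgeFinset,
        (if e ∈ Q.sym2 then (1:ℝ) else 0) * 1 * (if v ∈ e then t else 0) = 0 := by
      refine Finset.sum_eq_zero fun e he => ?_
      rw [mul_one]; exact hz e he
    rw [hz1, hz2]
    have hεK : ε * (K / ε) = K := mul_div_cancel₀ K (ne_of_gt hε)
    simp only [one_mul, add_zero]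
    rw [hεK, div_self (ne_of_gt hK0), max_self, div_one]
  -- value in scenario σ_v is nonnegative
  have hValv_nonneg : ∀ v : V,
      0 ≤ crValv G K ε t (fun e => if e ∈ Q.sym2 then 1 else 0) (fun _ => 1) v := by
    intro v
    unfold crValv
    apply div_nonneg
    · apply add_nonneg
      · exact mul_nonneg zero_le_one (div_nonneg (le_of_lt hK0) (le_of_lt hε))
      · refine Finset.sum_nonneg fun e _ => mul_nonneg ?_ ?_
        · simp only []
          split <;> norm_num
        · split <;> simp [ht]
    · exact le_trans zero_le_one (le_max_left _ _)
  -- assemble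
  unfold crEv
  rw [hVal0]
  have hstep : ((n : ℝ) - k) * ((δ / n) * (K / ε)) ≤
      ∑ v : V, (δ / (n : ℝ)) *
        crValv G K ε t (fun e => if e ∈ Q.sym2 then 1 else 0) (fun _ => 1) v := by
    have hsub : Qᶜ ⊆ (Finset.univ : Finset V) := Finset.subset_univ _
    have h1 : ∑ v ∈ Qᶜ, (δ / (n : ℝ)) *
        crValv G K ε t (fun e => if e ∈ Q.sym2 then 1 else 0) (fun _ => 1) v ≤
        ∑ v : V, (δ / (n : ℝ)) *
        crValv G K ε t (fun e => if e ∈ Q.sym2 then 1 else 0) (fun _ => 1) v := by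
      refine Finset.sum_le_sum_of_subset_of_nonneg hsub fun i _ _ => ?_
      exact mul_nonneg (div_nonneg hδ0 (le_of_lt hn0)) (hValv_nonneg i)
    have h2 : ∑ v ∈ Qᶜ, (δ / (n : ℝ)) *
        crValv G K ε t (fun e => if e ∈ Q.sym2 then 1 else 0) (fun _ => 1) v =
        ((n : ℝ) - k) * ((δ / n) * (K / ε)) := by
      rw [Finset.sum_congr rfl fun v hv => by
        rw [hValv_out v (Finset.mem_compl.1 hv)]]
      rw [Finset.sum_const, Finset.card_compl, hQ.2, nsmul_eq_mul]
      congr 1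
      rw [Nat.cast_sub hkn]
    linarith
  have hrw : (δ * ((n : ℝ) - k) / n) * (K / ε) = ((n : ℝ) - k) * ((δ / n) * (K / ε)) := by
    field_simp
  rw [hrw]
  linarith
end

section
/- (Too many touched vertices implies low value.) In the clique-reduction instance, assume 0 < ε < 1/(k+1), 0 < δ < 1, 2 ≤ k ≤ n, and that t > 0 satisfies (k+1)·(K/ε + αt)/(K + αt) < 1/ε where α = 1/(2m). Let b be a solution with b_v = 1 for every vertex keyword v ∈ V_G, and let X = {e ∈ E_G : b_e ≥ α}. If at least k+1 vertices of G are incident to some edge in X, then E[value(b)] < V. -/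
/-!
Because every vertex keyword is bid on fully, the value of scenario `σ_v` is
`K (K/ε + A_v) / (K + A_v)`, where `A_v` is the number of edge clicks bought around `v`; this
is at most `K/ε` and decreases in `A_v`. A touched vertex has `A_v ≥ α t`, so the `k + 1`
touched vertices together contribute less than `K/ε` by the parameter condition, while each of
the remaining `n - k - 1` vertices contributes at most `K/ε`, and `σ₀` never yields more than
the budget `K`.
-/

open Finset

lemma div_max_one_div_le {K : ℝ} (hK : 0 < K) (x : ℝ) : x / max 1 (x / K) ≤ K := by
  rw [div_le_iff₀ (lt_of_lt_of_le one_pos (le_max_left _ _))]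
  calc x = K * (x / K) := by field_simp
    _ ≤ K * max 1 (x / K) := mul_le_mul_of_nonneg_left (le_max_right _ _) hK.le

lemma Finset.sum_le_card_mul_add_card_compl_mul {ι : Type*} [Fintype ι] [DecidableEq ι]
    (f : ι → ℝ) (T : Finset ι) {a b : ℝ} (ha : ∀ i ∈ T, f i ≤ a) (hb : ∀ i, f i ≤ b) :
    ∑ i, f i ≤ #T * a + ((Fintype.card ι : ℝ) - #T) * b := by
  rw [← sum_add_sum_compl T]
  have hTc : ((#Tᶜ : ℕ) : ℝ) = Fintype.card ι - #T := by
    rw [card_compl, Nat.cast_sub (card_le_univ T)]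
  have h₁ := sum_le_card_nsmul T f a ha
  have h₂ := sum_le_card_nsmul Tᶜ f b (fun i _ => hb i)
  rw [nsmul_eq_mul] at h₁ h₂
  rw [hTc] at h₂
  linarith

/-- The value of scenario `σ_v` when keyword `v` is bid on fully and the edge keywords
around `v` receive `A` clicks in total. -/
noncomputable def vertexScenarioValue (K ε A : ℝ) : ℝ := K * (K / ε + A) / (K + A)

section vertexScenarioValue

variable {K ε : ℝ}

lemma vertexScenarioValue_zero (hK : K ≠ 0) : vertexScenarioValue K ε 0 = K / ε := by
  unfold vertexScenarioValue
  rw [add_zero, add_zero, mul_div_cancel_left₀ _ hK]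

lemma vertexScenarioValue_antitoneOn (hK : 0 < K) (hε0 : 0 < ε) (hε1 : ε ≤ 1) :
    AntitoneOn (vertexScenarioValue K ε) (Set.Ici 0) := by
  intro B hB C hC hBC
  have hKε : K ≤ K / ε := by rw [le_div_iff₀ hε0]; nlinarith
  have hB : (0 : ℝ) ≤ B := hB
  unfold vertexScenarioValue
  rw [div_le_div_iff₀ (by linarith) (by linarith)]
  nlinarith [mul_nonneg (mul_nonneg hK.le (sub_nonneg.2 hBC)) (sub_nonneg.2 hKε)]

lemma vertexScenarioValue_le (hK : 0 < K) (hε0 : 0 < ε) (hε1 : ε ≤ 1) {A : ℝ} (hA : 0 ≤ A) :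
    vertexScenarioValue K ε A ≤ K / ε := by
  rw [← vertexScenarioValue_zero hK.ne']
  exact vertexScenarioValue_antitoneOn hK hε0 hε1 Set.self_mem_Ici hA hA

end vertexScenarioValue

section CliqueReduction

variable {V : Type*} [Fintype V] [DecidableEq V] (G : SimpleGraph V) [DecidableRel G.Adj]
  {t : ℝ} {bE : Sym2 V → ℝ}

/-- The clicks bought on edge keywords incident to `v` in scenario `σ_v`. -/
noncomputable def incidentClicks (t : ℝ) (bE : Sym2 V → ℝ) (v : V) : ℝ :=
  ∑ e ∈ G.edgeFinset, bE e * (if v ∈ e then t else 0)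

variable {G}

lemma incidentClicks_nonneg (ht : 0 ≤ t) (hbE : ∀ e ∈ G.edgeFinset, 0 ≤ bE e) (v : V) :
    0 ≤ incidentClicks G t bE v :=
  sum_nonneg fun e he => mul_nonneg (hbE e he) (ite_nonneg ht le_rfl)

lemma mul_le_incidentClicks (ht : 0 ≤ t) (hbE : ∀ e ∈ G.edgeFinset, 0 ≤ bE e)
    {e : Sym2 V} (he : e ∈ G.edgeFinset) {v : V} (hv : v ∈ e) :
    bE e * t ≤ incidentClicks G t bE v := by
  calc bE e * t = bE e * (if v ∈ e then t else 0) := by rw [if_pos hv]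
    _ ≤ incidentClicks G t bE v :=
      single_le_sum (f := fun e => bE e * (if v ∈ e then t else 0))
        (fun e he => mul_nonneg (hbE e he) (ite_nonneg ht le_rfl)) he

lemma crValv_one_eq {K ε : ℝ} (hK : 0 < K) (hε : ε ≠ 0) (ht : 0 ≤ t)
    (hbE : ∀ e ∈ G.edgeFinset, 0 ≤ bE e) (v : V) :
    crValv G K ε t bE (fun _ => 1) v = vertexScenarioValue K ε (incidentClicks G t bE v) := by
  have hA := incidentClicks_nonneg ht hbE v
  have hmax : max 1 ((K + incidentClicks G t bE v) / K) = (K + incidentClicks G t bE v) / K :=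
    max_eq_right (by rw [le_div_iff₀ hK]; linarith)
  unfold crValv vertexScenarioValue
  simp only [one_mul, mul_one, mul_div_cancel₀ K hε]
  rw [← incidentClicks, hmax, div_div_eq_mul_div, mul_comm]

lemma crVal0_le {K : ℝ} (hK : 0 < K) (bE : Sym2 V → ℝ) : crVal0 G K bE ≤ K := by
  unfold crVal0
  simp only [mul_one]
  exact div_max_one_div_le hK _

lemma sum_crValv_lt {K ε α : ℝ} (hK : 0 < K) (hε0 : 0 < ε) (hε1 : ε ≤ 1) (ht : 0 ≤ t)
    (hbE : ∀ e ∈ G.edgeFinset, 0 ≤ bE e) (hα : 0 ≤ α) {T : Finset V}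
    (hT : ∀ v ∈ T, ∃ e ∈ G.edgeFinset, α ≤ bE e ∧ v ∈ e)
    (hgain : #T * vertexScenarioValue K ε (α * t) < K / ε) :
    ∑ v, crValv G K ε t bE (fun _ => 1) v < (Fintype.card V - #T + 1) * (K / ε) := by
  have hval := crValv_one_eq hK hε0.ne' ht hbE
  have h_touched : ∀ v ∈ T,
      crValv G K ε t bE (fun _ => 1) v ≤ vertexScenarioValue K ε (α * t) := by
    intro v hv
    obtain ⟨e, he, hαe, hve⟩ := hT v hv
    rw [hval]
    exact vertexScenarioValue_antitoneOn hK hε0 hε1 (mul_nonneg hα ht)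
      (incidentClicks_nonneg ht hbE v)
      ((mul_le_mul_of_nonneg_right hαe ht).trans (mul_le_incidentClicks ht hbE he hve))
  have h_all : ∀ v, crValv G K ε t bE (fun _ => 1) v ≤ K / ε := fun v =>
    (hval v).trans_le (vertexScenarioValue_le hK hε0 hε1 (incidentClicks_nonneg ht hbE v))
  linarith [sum_le_card_mul_add_card_compl_mul _ T h_touched h_all]

lemma crEv_lt {K ε δ S : ℝ} {bV : V → ℝ} (hK : 0 < K) (hδ0 : 0 < δ) (hδ1 : δ ≤ 1)
    (hn : 0 < Fintype.card V) (hS : ∑ v, crValv G K ε t bE bV v < S) :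
    crEv G K ε δ t bE bV < (1 - δ) * K + δ / Fintype.card V * S := by
  unfold crEv
  rw [← mul_sum]
  exact add_lt_add_of_le_of_lt (mul_le_mul_of_nonneg_left (crVal0_le hK bE) (by linarith))
    (mul_lt_mul_of_pos_left hS (div_pos hδ0 (by exact_mod_cast hn)))

end CliqueReduction

theorem stmt_16_general {V : Type*} [Fintype V] [DecidableEq V] (G : SimpleGraph V)
    [DecidableRel G.Adj]
    (k : ℕ) (hk : 2 ≤ k)
    (ε δ t : ℝ) (hε0 : 0 < ε) (hε1 : ε < 1 / (k + 1)) (hδ0 : 0 < δ) (hδ1 : δ < 1)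
    (ht : 0 < t)
    (hparam : (k + 1 : ℝ) *
        ((k * (k - 1) / 2 : ℝ) / ε + (1 / (2 * (G.edgeFinset.card : ℝ))) * t) /
        ((k * (k - 1) / 2 : ℝ) + (1 / (2 * (G.edgeFinset.card : ℝ))) * t) < 1 / ε)
    (bE : Sym2 V → ℝ)
    (hbE : ∀ e ∈ G.edgeFinset, 0 ≤ bE e ∧ bE e ≤ 1)
    (htouch : k + 1 ≤
      {v : V | ∃ e ∈ G.edgeFinset,
        1 / (2 * (G.edgeFinset.card : ℝ)) ≤ bE e ∧ v ∈ e}.ncard) :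
    crEv G (k * (k - 1) / 2 : ℝ) ε δ t bE (fun _ => 1) <
      (1 - δ) * (k * (k - 1) / 2 : ℝ) +
        (δ * ((Fintype.card V : ℝ) - k) / (Fintype.card V : ℝ)) *
          ((k * (k - 1) / 2 : ℝ) / ε) := by
  set K : ℝ := k * (k - 1) / 2
  set α : ℝ := 1 / (2 * (G.edgeFinset.card : ℝ))
  have hK : 0 < K := by
    have : (2 : ℝ) ≤ k := by exact_mod_cast hk
    simp only [K]
    nlinarith
  have hε1' : ε ≤ 1 := hε1.le.trans (div_le_one_of_le₀ (by linarith) (by positivity))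
  obtain ⟨T, hTS, hT⟩ := exists_subset_card_eq (s := {v : V | ∃ e ∈ G.edgeFinset,
    α ≤ bE e ∧ v ∈ e}.toFinset) (n := k + 1) (by rwa [← Set.ncard_eq_toFinset_card'])
  have hn : k + 1 ≤ Fintype.card V := hT ▸ card_le_univ T
  have h_gain : #T * vertexScenarioValue K ε (α * t) < K / ε := by
    calc #T * vertexScenarioValue K ε (α * t)
        = K * ((k + 1) * (K / ε + α * t) / (K + α * t)) := by
          rw [hT, vertexScenarioValue]; push_cast; ring
      _ < K * (1 / ε) := mul_lt_mul_of_pos_left hparam hK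
      _ = K / ε := mul_one_div K ε
  have hS := sum_crValv_lt (α := α) hK hε0 hε1' ht.le (fun e he => (hbE e he).1) (by positivity)
    (fun v hv => by simpa using hTS hv) h_gain
  calc crEv G K ε δ t bE (fun _ => 1)
      < (1 - δ) * K + δ / Fintype.card V * ((Fintype.card V - #T + 1) * (K / ε)) :=
        crEv_lt hK hδ0 hδ1.le (by omega) hS
    _ = (1 - δ) * K + δ * (Fintype.card V - k) / Fintype.card V * (K / ε) := by
        rw [hT]; push_cast; ring

/-- **Too many touched vertices implies low value.** Suppose the solution bids fully on all
vertex keywords, and let `X` be the set of edge keywords with `bE e ≥ α = 1/(2m)`. If at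
least `k+1` vertices of `G` are incident to some edge in `X`, then the expected value is
strictly below `V = (1−δ)·K + (δ(n−k)/n)·(K/ε)`, where `K = k(k−1)/2`. -/
theorem stmt_16 {V : Type*} [Fintype V] [DecidableEq V] (G : SimpleGraph V)
    [DecidableRel G.Adj]
    (k : ℕ) (hk : 2 ≤ k) (hkn : k ≤ Fintype.card V) (hm : 1 ≤ G.edgeFinset.card)
    (ε δ t : ℝ) (hε0 : 0 < ε) (hε1 : ε < 1 / (k + 1)) (hδ0 : 0 < δ) (hδ1 : δ < 1)
    (ht : 0 < t)
    (hparam : (k + 1 : ℝ) *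
        ((k * (k - 1) / 2 : ℝ) / ε + (1 / (2 * (G.edgeFinset.card : ℝ))) * t) /
        ((k * (k - 1) / 2 : ℝ) + (1 / (2 * (G.edgeFinset.card : ℝ))) * t) < 1 / ε)
    (bE : Sym2 V → ℝ)
    (hbE : ∀ e ∈ G.edgeFinset, 0 ≤ bE e ∧ bE e ≤ 1)
    (htouch : k + 1 ≤
      {v : V | ∃ e ∈ G.edgeFinset,
        1 / (2 * (G.edgeFinset.card : ℝ)) ≤ bE e ∧ v ∈ e}.ncard) :
    crEv G (k * (k - 1) / 2 : ℝ) ε δ t bE (fun _ => 1) <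
      (1 - δ) * (k * (k - 1) / 2 : ℝ) +
        (δ * ((Fintype.card V : ℝ) - k) / (Fintype.card V : ℝ)) *
          ((k * (k - 1) / 2 : ℝ) / ε) :=
  stmt_16_general G k hk ε δ t hε0 hε1 hδ0 hδ1 ht hparam bE hbE htouch
end

section
/- (Correctness of the clique reduction.) In the clique-reduction instance, assume 2 ≤ k ≤ n, 0 < ε < 1/(k+1), 0 < δ < 1 with (1−δ)/2 − kδK/(nε) > 0, and t > 0 with (k+1)·(K/ε + αt)/(K + αt) < 1/ε where α = 1/(2m). Then G contains a clique on k vertices if and only if there exists a (fractional) solution b with E[value(b)] ≥ V = (1−δ)·K + (δ(n−k)/n)·(K/ε). -/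
open Finset

/-! A `k`-clique `Q` yields the solution bidding on the `K` edges inside `Q` and on the vertex
keywords outside `Q`: it spends exactly the budget in `σ₀` and in every `σ_v` with `v ∉ Q`,
which gives the value `V`.

Conversely, call a vertex heavy when the bids on its incident edges sum to at least `α`.
Every scenario `σ_v` is worth at most `K/ε`, and at most `B = K(K/ε + tα)/(K + tα)` when `v` is
heavy; since `(k+1)B < K/ε`, reaching `V` leaves room for at most `k` heavy vertices. Reaching
`V` also forces the value of `σ₀`, hence the total edge bid, above `K − 1/2`. The edges with a
light endpoint carry at most `mα = 1/2` of it, so more than `K − 1` edges lie among at most `k`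
heavy vertices, which therefore form a `k`-clique. -/

theorem Nat.choose_two_lt_choose_two {a b : ℕ} (hab : a < b) (hb : 2 ≤ b) :
    a.choose 2 < b.choose 2 := by
  obtain ⟨c, rfl⟩ : ∃ c, b = c + 1 := ⟨b - 1, by omega⟩
  calc a.choose 2 ≤ c.choose 2 := Nat.choose_le_choose 2 (by omega)
    _ < c.choose 2 + c := by omega
    _ = (c + 1).choose 2 := by rw [Nat.choose_succ_succ', Nat.choose_one_right, add_comm]

namespace SimpleGraph

variable {V : Type*} [Fintype V] [DecidableEq V] {G : SimpleGraph V} [DecidableRel G.Adj]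
  {s : Finset V} {k : ℕ}

theorem edgeFinset_inter_sym2_subset_image_offDiag (s : Finset V) :
    G.edgeFinset ∩ s.sym2 ⊆ s.offDiag.image Sym2.mk.uncurry := by
  intro e he
  obtain ⟨heG, hes⟩ := Finset.mem_inter.mp he
  induction e using Sym2.ind with
  | _ x y =>
    rw [Finset.mk_mem_sym2_iff] at hes
    exact Finset.mem_image.mpr
      ⟨(x, y), Finset.mem_offDiag.mpr ⟨hes.1, hes.2, (G.mem_edgeFinset.mp heG).ne⟩, rfl⟩

theorem IsClique.edgeFinset_inter_sym2 (h : G.IsClique s) :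
    G.edgeFinset ∩ s.sym2 = s.offDiag.image Sym2.mk.uncurry := by
  refine (edgeFinset_inter_sym2_subset_image_offDiag s).antisymm fun e he => ?_
  obtain ⟨⟨x, y⟩, hxy, rfl⟩ := Finset.mem_image.mp he
  obtain ⟨hx, hy, hne⟩ := Finset.mem_offDiag.mp hxy
  exact Finset.mem_inter.mpr
    ⟨G.mem_edgeFinset.mpr (h hx hy hne), Finset.mk_mem_sym2_iff.mpr ⟨hx, hy⟩⟩

theorem IsNClique.card_edgeFinset_inter_sym2 (h : G.IsNClique k s) :
    #(G.edgeFinset ∩ s.sym2) = k.choose 2 := by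
  rw [h.isClique.edgeFinset_inter_sym2, Sym2.card_image_offDiag, h.card_eq]

theorem isNClique_of_choose_two_le_card (hk : 2 ≤ k) (hs : #s ≤ k)
    (h : k.choose 2 ≤ #(G.edgeFinset ∩ s.sym2)) : G.IsNClique k s := by
  have hsub := edgeFinset_inter_sym2_subset_image_offDiag (G := G) s
  have hcard := Finset.card_le_card hsub
  rw [Sym2.card_image_offDiag] at hcard
  have hsk : #s = k := by
    by_contra hne
    have := Nat.choose_two_lt_choose_two (lt_of_le_of_ne hs hne) hk
    omega
  have heq := Finset.eq_of_subset_of_card_le hsub (by rw [Sym2.card_image_offDiag, hsk]; exact h)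
  refine ⟨fun x hx y hy hxy => ?_, hsk⟩
  have hmem : s(x, y) ∈ G.edgeFinset ∩ s.sym2 :=
    heq ▸ Finset.mem_image.mpr ⟨(x, y), Finset.mem_offDiag.mpr ⟨hx, hy, hxy⟩, rfl⟩
  exact G.mem_edgeFinset.mp (Finset.mem_inter.mp hmem).1

theorem sum_sdiff_sym2_le {w : Sym2 V → ℝ} {α : ℝ} (hw : ∀ e ∈ G.edgeFinset, 0 ≤ w e)
    (hα : 0 ≤ α) (hs : ∀ v ∉ s, ∑ e ∈ G.incidenceFinset v, w e ≤ α) :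
    ∑ e ∈ G.edgeFinset \ s.sym2, w e ≤ (#G.edgeFinset : ℝ) * α := by
  have hle : ∀ e ∈ G.edgeFinset \ s.sym2, w e ≤ α := by
    intro e he
    obtain ⟨heG, hes⟩ := Finset.mem_sdiff.mp he
    obtain ⟨v, hve, hvs⟩ : ∃ v ∈ e, v ∉ s := by simpa [Finset.mem_sym2_iff] using hes
    have hinc : e ∈ G.incidenceFinset v := by
      rw [incidenceFinset_eq_filter]; exact Finset.mem_filter.mpr ⟨heG, hve⟩
    refine le_trans ?_ (hs v hvs)
    exact Finset.single_le_sum (fun e' he' => hw e' (G.incidenceFinset_subset v he')) hinc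
  calc ∑ e ∈ G.edgeFinset \ s.sym2, w e ≤ (#(G.edgeFinset \ s.sym2) : ℝ) * α := by
        simpa using Finset.sum_le_card_nsmul _ _ _ hle
    _ ≤ (#G.edgeFinset : ℝ) * α := by
        gcongr; exact Finset.sdiff_subset

end SimpleGraph

noncomputable def budgetedValue (K clicks cost : ℝ) : ℝ :=
  clicks / max 1 (cost / K)

section BudgetedValue

variable {K N S : ℝ}

theorem budgetedValue_of_cost_eq_budget (hK : K ≠ 0) (N : ℝ) : budgetedValue K N K = N := by
  rw [budgetedValue, div_self hK, max_self, div_one]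

theorem budgetedValue_nonneg (hN : 0 ≤ N) : 0 ≤ budgetedValue K N S :=
  div_nonneg hN (zero_le_one.trans (le_max_left _ _))

theorem budgetedValue_le_clicks (hN : 0 ≤ N) : budgetedValue K N S ≤ N :=
  div_le_self hN (le_max_left _ _)

theorem budgetedValue_le_budget (hK : 0 < K) (hNS : N ≤ S) : budgetedValue K N S ≤ K := by
  rcases le_or_gt (S / K) 1 with h | h
  · rw [budgetedValue, max_eq_left h, div_one]
    exact hNS.trans ((div_le_one hK).mp h)
  · rw [budgetedValue, max_eq_right h.le, div_le_iff₀ (by positivity),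
      mul_div_cancel₀ _ hK.ne']
    exact hNS

theorem budgetedValue_le {c b u y : ℝ} (hK : 0 < K) (hKc : K ≤ c) (hb : b ≤ 1) (hu : 0 ≤ u)
    (huy : u ≤ y) : budgetedValue K (b * c + y) (b * K + y) ≤ K * (c + u) / (K + u) := by
  rcases le_or_gt ((b * K + y) / K) 1 with h | h
  · have hS : b * K + y ≤ K := (div_le_one hK).mp h
    rw [budgetedValue, max_eq_left h, div_one, le_div_iff₀ (by positivity)]
    refine le_of_mul_le_mul_left ?_ hK
    -- `K (b c + y) ≤ K² + (K - u) (c - K)`,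
    -- and `(K² + (K - u) (c - K)) (K + u) = K² (c + u) - u² (c - K)`
    nlinarith [mul_nonneg (mul_nonneg (sub_nonneg.mpr hS) hK.le) (by positivity : 0 ≤ K + u),
      mul_nonneg (mul_nonneg (by linarith : 0 ≤ K - u - b * K) (sub_nonneg.mpr hKc))
        (by positivity : 0 ≤ K + u),
      mul_nonneg (mul_self_nonneg u) (sub_nonneg.mpr hKc)]
  · rw [budgetedValue, max_eq_right h.le, div_le_div_iff₀ (by positivity) (by positivity),
      mul_right_comm, mul_div_cancel₀ _ hK.ne']
    -- the inequality is `(c - K) (y - b u) ≥ 0`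
    nlinarith [mul_nonneg (sub_nonneg.mpr hKc) (by nlinarith : 0 ≤ y - b * u)]

end BudgetedValue

theorem Finset.sum_lt_card_sub_mul_of_lt_card {ι : Type*} [Fintype ι] [DecidableEq ι]
    {f : ι → ℝ} {A : Finset ι} {k : ℕ} {B c : ℝ} (hc : 0 ≤ c) (hf : ∀ i, f i ≤ c)
    (hfA : ∀ i ∈ A, f i ≤ B) (hB : (k + 1) * B < c) (hk : k < #A) :
    ∑ i, f i < (Fintype.card ι - k) * c := by
  have hsplit : ∑ i, f i ≤ #A * B + (Fintype.card ι - #A) * c := by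
    rw [← Finset.sum_add_sum_compl A, ← Nat.cast_sub (Finset.card_le_univ A),
      ← Finset.card_compl]
    gcongr
    · simpa using Finset.sum_le_card_nsmul A f B hfA
    · simpa using Finset.sum_le_card_nsmul Aᶜ f c fun i _ => hf i
  have hAk : (k : ℝ) + 1 ≤ #A := by exact_mod_cast hk
  -- `(k + 1) #A B < #A c ≤ (k + 1) (#A - k) c`
  nlinarith [mul_nonneg (mul_nonneg (Nat.cast_nonneg k) (sub_nonneg.mpr hAk)) hc]

section CliqueReduction

variable {V : Type*} [Fintype V] [DecidableEq V] {G : SimpleGraph V} [DecidableRel G.Adj]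
  {k : ℕ} {K ε δ t : ℝ} {bE : Sym2 V → ℝ} {bV : V → ℝ}

theorem crVal0_eq_budgetedValue :
    crVal0 G K bE =
      budgetedValue K (∑ e ∈ G.edgeFinset, bE e) (∑ e ∈ G.edgeFinset, bE e) := by
  simp only [crVal0, budgetedValue, mul_one]

theorem crValv_eq_budgetedValue (hε : ε ≠ 0) (v : V) :
    crValv G K ε t bE bV v =
      budgetedValue K (bV v * (K / ε) + t * ∑ e ∈ G.incidenceFinset v, bE e)
        (bV v * K + t * ∑ e ∈ G.incidenceFinset v, bE e) := by
  have hinc : ∑ e ∈ G.edgeFinset, bE e * (if v ∈ e then t else 0) =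
      t * ∑ e ∈ G.incidenceFinset v, bE e := by
    rw [G.incidenceFinset_eq_filter, Finset.sum_filter, Finset.mul_sum]
    exact Finset.sum_congr rfl fun e _ => by split_ifs <;> ring
  rw [crValv, budgetedValue, mul_assoc (bV v), mul_div_cancel₀ K hε]
  simp only [mul_one, hinc]

theorem crValv_le_of_le_sum_incidenceFinset {α : ℝ} {v : V} (hK : 0 < K) (hε0 : 0 < ε)
    (hε1 : ε ≤ 1) (ht : 0 ≤ t) (hα : 0 ≤ α) (hb : bV v ≤ 1)
    (hαv : α ≤ ∑ e ∈ G.incidenceFinset v, bE e) :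
    crValv G K ε t bE bV v ≤ K * (K / ε + t * α) / (K + t * α) := by
  rw [crValv_eq_budgetedValue hε0.ne']
  exact budgetedValue_le hK (le_div_self hK.le hε0 hε1) hb (mul_nonneg ht hα)
    (mul_le_mul_of_nonneg_left hαv ht)

theorem crValv_le (hK : 0 < K) (hε0 : 0 < ε) (hε1 : ε ≤ 1) (ht : 0 ≤ t)
    (hbE : ∀ e ∈ G.edgeFinset, 0 ≤ bE e) {v : V} (hb : bV v ≤ 1) :
    crValv G K ε t bE bV v ≤ K / ε := by
  have := crValv_le_of_le_sum_incidenceFinset hK hε0 hε1 ht le_rfl hb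
    (Finset.sum_nonneg fun e he => hbE e (G.incidenceFinset_subset v he))
  rwa [mul_zero, add_zero, add_zero, mul_div_cancel_left₀ _ hK.ne'] at this

theorem crValv_nonneg (hK : 0 ≤ K) (hε : 0 < ε) (ht : 0 ≤ t)
    (hbE : ∀ e ∈ G.edgeFinset, 0 ≤ bE e) {v : V} (hb : 0 ≤ bV v) :
    0 ≤ crValv G K ε t bE bV v := by
  rw [crValv_eq_budgetedValue hε.ne']
  exact budgetedValue_nonneg (add_nonneg (mul_nonneg hb (div_nonneg hK hε.le))
    (mul_nonneg ht (Finset.sum_nonneg fun e he => hbE e (G.incidenceFinset_subset v he))))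

theorem sub_mul_le_sum_crValv_of_le_crEv (hn : 0 < Fintype.card V) (hδ0 : 0 < δ) (hδ1 : δ ≤ 1)
    (hval0 : crVal0 G K bE ≤ K)
    (hEv : (1 - δ) * K +
        (δ * ((Fintype.card V : ℝ) - k) / (Fintype.card V : ℝ)) * (K / ε) ≤
      crEv G K ε δ t bE bV) :
    ((Fintype.card V : ℝ) - k) * (K / ε) ≤ ∑ v, crValv G K ε t bE bV v := by
  have hn' : (0 : ℝ) < Fintype.card V := Nat.cast_pos.mpr hn
  rw [crEv, ← Finset.mul_sum] at hEv
  refine le_of_mul_le_mul_left ?_ (div_pos hδ0 hn')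
  have hδn : δ * ((Fintype.card V : ℝ) - k) / (Fintype.card V : ℝ) * (K / ε) =
      δ / (Fintype.card V : ℝ) * (((Fintype.card V : ℝ) - k) * (K / ε)) := by ring
  nlinarith [mul_le_mul_of_nonneg_left hval0 (sub_nonneg.mpr hδ1)]

theorem sub_half_lt_crVal0_of_le_crEv (hn : 0 < Fintype.card V) (hδ0 : 0 ≤ δ) (hδ1 : δ < 1)
    (hδparam : 0 < (1 - δ) / 2 - k * δ * K / ((Fintype.card V : ℝ) * ε))
    (hval : ∀ v, crValv G K ε t bE bV v ≤ K / ε)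
    (hEv : (1 - δ) * K +
        (δ * ((Fintype.card V : ℝ) - k) / (Fintype.card V : ℝ)) * (K / ε) ≤
      crEv G K ε δ t bE bV) :
    K - 1 / 2 < crVal0 G K bE := by
  have hn' : (0 : ℝ) < Fintype.card V := Nat.cast_pos.mpr hn
  rw [crEv, ← Finset.mul_sum] at hEv
  have hS : δ / (Fintype.card V : ℝ) * ∑ v, crValv G K ε t bE bV v ≤ δ * (K / ε) := by
    calc _ ≤ δ / (Fintype.card V : ℝ) * ∑ _v : V, K / ε := by
          gcongr with v; exact hval v
      _ = δ * (K / ε) := by rw [Finset.sum_const, Finset.card_univ, nsmul_eq_mul]; field_simp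
  have hδn : δ * ((Fintype.card V : ℝ) - k) / (Fintype.card V : ℝ) * (K / ε) =
      δ * (K / ε) - k * δ * K / ((Fintype.card V : ℝ) * ε) := by
    field_simp
  -- `(1 - δ) (K - value(σ₀)) ≤ k δ K / (n ε) < (1 - δ) / 2`
  nlinarith

theorem exists_solution_of_isNClique {Q : Finset V} (hQ : G.IsNClique k Q) (hk : 2 ≤ k)
    (hε : 0 < ε) (hδ : 0 ≤ δ) (ht : 0 ≤ t) :
    ∃ (bE : Sym2 V → ℝ) (bV : V → ℝ),
      (∀ e ∈ G.edgeFinset, 0 ≤ bE e ∧ bE e ≤ 1) ∧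
      (∀ v, 0 ≤ bV v ∧ bV v ≤ 1) ∧
      (1 - δ) * (k.choose 2 : ℝ) +
          (δ * ((Fintype.card V : ℝ) - k) / (Fintype.card V : ℝ)) *
            ((k.choose 2 : ℝ) / ε) ≤
        crEv G (k.choose 2) ε δ t bE bV := by
  set K : ℝ := ((k.choose 2 : ℕ) : ℝ)
  have hK : 0 < K := Nat.cast_pos.mpr (Nat.choose_pos hk)
  set bE : Sym2 V → ℝ := fun e => if e ∈ Q.sym2 then 1 else 0
  set bV : V → ℝ := fun v => if v ∈ Q then 0 else 1
  have hbE : ∀ e ∈ G.edgeFinset, 0 ≤ bE e ∧ bE e ≤ 1 := fun e _ => by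
    simp only [bE]; split_ifs <;> norm_num
  have hbV : ∀ v, 0 ≤ bV v ∧ bV v ≤ 1 := fun v => by simp only [bV]; split_ifs <;> norm_num
  refine ⟨bE, bV, hbE, hbV, ?_⟩
  have hval0 : crVal0 G K bE = K := by
    rw [crVal0_eq_budgetedValue, Finset.sum_boole, Finset.filter_mem_eq_inter,
      hQ.card_edgeFinset_inter_sym2]
    exact budgetedValue_of_cost_eq_budget hK.ne' K
  have hvalv : ∀ v ∉ Q, crValv G K ε t bE bV v = K / ε := by
    intro v hv
    have hinc : ∑ e ∈ G.incidenceFinset v, bE e = 0 :=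
      Finset.sum_eq_zero fun e he => if_neg fun heQ =>
        hv (Finset.mem_sym2_iff.mp heQ v ((G.mem_incidenceFinset v e).mp he).2)
    rw [crValv_eq_budgetedValue hε.ne', hinc]
    simpa [bV, hv] using budgetedValue_of_cost_eq_budget hK.ne' (K / ε)
  have hsum : ((Fintype.card V : ℝ) - k) * (K / ε) ≤ ∑ v, crValv G K ε t bE bV v :=
    calc ((Fintype.card V : ℝ) - k) * (K / ε) = ∑ v ∈ Qᶜ, K / ε := by
          rw [Finset.sum_const, Finset.card_compl, nsmul_eq_mul, ← hQ.card_eq,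
            Nat.cast_sub (Finset.card_le_univ Q)]
      _ = ∑ v ∈ Qᶜ, crValv G K ε t bE bV v :=
          Finset.sum_congr rfl fun v hv => (hvalv v (Finset.mem_compl.mp hv)).symm
      _ ≤ ∑ v, crValv G K ε t bE bV v :=
          Finset.sum_le_sum_of_subset_of_nonneg (Finset.subset_univ _) fun v _ _ =>
            crValv_nonneg hK.le hε ht (fun e he => (hbE e he).1) (hbV v).1
  have hδn : δ * ((Fintype.card V : ℝ) - k) / (Fintype.card V : ℝ) * (K / ε) =
      δ / (Fintype.card V : ℝ) * (((Fintype.card V : ℝ) - k) * (K / ε)) := by ring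
  rw [crEv, hval0, ← Finset.mul_sum, hδn]
  gcongr

theorem exists_isNClique_of_le_crEv (hk : 2 ≤ k) (hn : 0 < Fintype.card V)
    (hm : 0 < #G.edgeFinset) (hε0 : 0 < ε) (hε1 : ε ≤ 1) (hδ0 : 0 < δ) (hδ1 : δ < 1)
    (hδparam : 0 < (1 - δ) / 2 - k * δ * (k.choose 2 : ℝ) / ((Fintype.card V : ℝ) * ε))
    (ht : 0 ≤ t)
    (htparam : (k + 1 : ℝ) *
        ((k.choose 2 : ℝ) / ε + (1 / (2 * (#G.edgeFinset : ℝ))) * t) /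
        ((k.choose 2 : ℝ) + (1 / (2 * (#G.edgeFinset : ℝ))) * t) < 1 / ε)
    (hbE : ∀ e ∈ G.edgeFinset, 0 ≤ bE e ∧ bE e ≤ 1) (hbV : ∀ v, bV v ≤ 1)
    (hEv : (1 - δ) * (k.choose 2 : ℝ) +
          (δ * ((Fintype.card V : ℝ) - k) / (Fintype.card V : ℝ)) *
            ((k.choose 2 : ℝ) / ε) ≤
        crEv G (k.choose 2) ε δ t bE bV) :
    ∃ Q : Finset V, G.IsNClique k Q := by
  set K : ℝ := ((k.choose 2 : ℕ) : ℝ)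
  set α : ℝ := 1 / (2 * (#G.edgeFinset : ℝ))
  set A : Finset V := {v | α ≤ ∑ e ∈ G.incidenceFinset v, bE e}
  have hK : 0 < K := Nat.cast_pos.mpr (Nat.choose_pos hk)
  have hα : 0 ≤ α := by positivity
  have hbE0 : ∀ e ∈ G.edgeFinset, 0 ≤ bE e := fun e he => (hbE e he).1
  have hval : ∀ v, crValv G K ε t bE bV v ≤ K / ε := fun v =>
    crValv_le hK hε0 hε1 ht hbE0 (hbV v)
  have hvalA : ∀ v ∈ A, crValv G K ε t bE bV v ≤ K * (K / ε + t * α) / (K + t * α) :=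
    fun v hv => crValv_le_of_le_sum_incidenceFinset hK hε0 hε1 ht hα (hbV v)
      (Finset.mem_filter.mp hv).2
  have hB : (k + 1) * (K * (K / ε + t * α) / (K + t * α)) < K / ε :=
    calc _ = K * ((k + 1 : ℝ) * (K / ε + α * t) / (K + α * t)) := by ring
      _ < K * (1 / ε) := mul_lt_mul_of_pos_left htparam hK
      _ = K / ε := mul_one_div K ε
  have hval0 : crVal0 G K bE ≤ K := by
    rw [crVal0_eq_budgetedValue]; exact budgetedValue_le_budget hK le_rfl
  have hAk : #A ≤ k := not_lt.mp fun hA =>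
    (Finset.sum_lt_card_sub_mul_of_lt_card (by positivity) hval hvalA hB hA).not_ge
      (sub_mul_le_sum_crValv_of_le_crEv hn hδ0 hδ1.le hval0 hEv)
  have hM : K - 1 / 2 < ∑ e ∈ G.edgeFinset, bE e := by
    refine (sub_half_lt_crVal0_of_le_crEv hn hδ0.le hδ1 hδparam hval hEv).trans_le ?_
    rw [crVal0_eq_budgetedValue]; exact budgetedValue_le_clicks (Finset.sum_nonneg hbE0)
  have hlight : ∑ e ∈ G.edgeFinset \ A.sym2, bE e ≤ 1 / 2 := by
    have hmα : (#G.edgeFinset : ℝ) * α = 1 / 2 := by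
      have : (#G.edgeFinset : ℝ) ≠ 0 := Nat.cast_ne_zero.mpr hm.ne'
      simp only [α]; field_simp
    exact hmα ▸ G.sum_sdiff_sym2_le hbE0 hα fun v hv =>
      (not_le.mp fun h => hv (Finset.mem_filter.mpr ⟨Finset.mem_univ v, h⟩)).le
  have hheavy : ∑ e ∈ G.edgeFinset ∩ A.sym2, bE e ≤ #(G.edgeFinset ∩ A.sym2) := by
    simpa using Finset.sum_le_card_nsmul _ bE 1 fun e he => (hbE e (Finset.mem_inter.mp he).1).2
  refine ⟨A, G.isNClique_of_choose_two_le_card hk hAk ?_⟩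
  have hsplit := Finset.sum_inter_add_sum_sdiff G.edgeFinset A.sym2 bE
  have : (k.choose 2 : ℝ) < #(G.edgeFinset ∩ A.sym2) + 1 := by linarith
  exact Nat.lt_add_one_iff.mp (by exact_mod_cast this)

end CliqueReduction

/-- **Correctness of the clique reduction.** Under the stated parameter choices, `G` contains
a clique on `k` vertices if and only if some (fractional) solution of the clique-reduction
instance has expected value at least `V = (1−δ)·K + (δ(n−k)/n)·(K/ε)`, where `K = k(k−1)/2`
and `α = 1/(2m)`. -/
theorem stmt_17 {V : Type*} [Fintype V] [DecidableEq V] (G : SimpleGraph V)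
    [DecidableRel G.Adj]
    (k : ℕ) (hk : 2 ≤ k) (hkn : k ≤ Fintype.card V) (hm : 1 ≤ G.edgeFinset.card)
    (ε δ t : ℝ) (hε0 : 0 < ε) (hε1 : ε < 1 / (k + 1)) (hδ0 : 0 < δ) (hδ1 : δ < 1)
    (hδparam : 0 < (1 - δ) / 2 -
      k * δ * (k * (k - 1) / 2 : ℝ) / ((Fintype.card V : ℝ) * ε))
    (ht : 0 < t)
    (htparam : (k + 1 : ℝ) *
        ((k * (k - 1) / 2 : ℝ) / ε + (1 / (2 * (G.edgeFinset.card : ℝ))) * t) /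
        ((k * (k - 1) / 2 : ℝ) + (1 / (2 * (G.edgeFinset.card : ℝ))) * t) < 1 / ε) :
    (∃ Q : Finset V, G.IsNClique k Q) ↔
      ∃ (bE : Sym2 V → ℝ) (bV : V → ℝ),
        (∀ e ∈ G.edgeFinset, 0 ≤ bE e ∧ bE e ≤ 1) ∧
        (∀ v, 0 ≤ bV v ∧ bV v ≤ 1) ∧
        (1 - δ) * (k * (k - 1) / 2 : ℝ) +
            (δ * ((Fintype.card V : ℝ) - k) / (Fintype.card V : ℝ)) *
              ((k * (k - 1) / 2 : ℝ) / ε) ≤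
          crEv G (k * (k - 1) / 2 : ℝ) ε δ t bE bV := by
  have hε1' : ε ≤ 1 := hε1.le.trans <| (div_le_one (by positivity)).mpr (by simp)
  simp only [← Nat.cast_choose_two] at hδparam htparam ⊢
  constructor
  · rintro ⟨Q, hQ⟩
    exact exists_solution_of_isNClique hQ hk hε0 hδ0.le ht.le
  · rintro ⟨bE, bV, hbE, hbV, hEv⟩
    exact exists_isNClique_of_le_crEv hk (by omega) hm hε0 hε1' hδ0 hδ1 hδparam ht.le htparam
      hbE (fun v => (hbV v).2) hEv
end
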